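/- arXiv:0806.1214 — 8 statements merged into one kernel-verified Lean document; each statement's English description precedes it below -/
import Mathlib

section
/- For positive integers m, n ≥ 2, the inequality m^(n-1) * n^(m-1) / C(mn, m+n-1) ≤ C * [(1 - 1/m)^(mn) * (1 + n/m)^m * (1 - 1/n)^(mn) * (1 + m/n)^n] / [(1 - 1/m)^n * (1 - 1/n)^m * (m+n)^(1/2)] holds for some absolute constant C > 0. -/
open Real Nat

/-! With `S = m + n - 1` and `P = (m - 1)(n - 1)`, so that `S + P = mn`, the two-sided Stirling
bounds `√(2πk) (k/e)^k ≤ k! ≤ e √k (k/e)^k` give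
`1 / C(mn, S) = S! P! / (mn)! ≤ e² / √(2π) · √(SP/mn) · S^S P^P / (mn)^(mn)`.
Multiplied by `m^(n-1) n^(m-1)`, the last two factors are exactly the right-hand side without `C`
times `(m/(m-1))^(m-1) · (n/(n-1))^(n-1) · (S/(m+n))^S · √(SP/mn) √(m+n) / (m+n)`. The first two
factors are at most `e` (as `(1 + 1/k)^k ≤ e`), the third at most `1`, and the rest at most `1`
since `SP ≤ mn (m+n)`. So `C = e⁴/√(2π)` works. -/

theorem factorial_le_exp_mul_sqrt_mul_pow {n : ℕ} (hn : n ≠ 0) :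
    (n ! : ℝ) ≤ exp 1 * √n * (n / exp 1) ^ n := by
  obtain ⟨k, rfl⟩ := exists_eq_succ_of_ne_zero hn
  have hseq : Stirling.stirlingSeq (k + 1) ≤ exp 1 / √2 := by
    simpa [Stirling.stirlingSeq_one] using Stirling.stirlingSeq'_antitone (Nat.zero_le k)
  rw [Stirling.stirlingSeq, div_le_iff₀ (by positivity)] at hseq
  calc ((k + 1) ! : ℝ)
      ≤ exp 1 / √2 * (√(2 * (k + 1 : ℕ)) * ((k + 1 : ℕ) / exp 1) ^ (k + 1)) := hseq
    _ = _ := by rw [sqrt_mul' _ (by positivity)]; field_simp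

theorem inv_choose_add_le {a b : ℕ} (ha : a ≠ 0) (hb : b ≠ 0) :
    (((a + b).choose a : ℕ) : ℝ)⁻¹ ≤
      exp 1 ^ 2 / √(2 * π) * √(a * b / (a + b)) * (a ^ a * b ^ b / (a + b) ^ (a + b)) := by
  have hab : a + b ≠ 0 := by omega
  rw [cast_add_choose, inv_div, div_le_iff₀ (by positivity)]
  calc (a ! * b ! : ℝ) ≤ (exp 1 * √a * (a / exp 1) ^ a) * (exp 1 * √b * (b / exp 1) ^ b) := by
        gcongr <;> exact factorial_le_exp_mul_sqrt_mul_pow ‹_›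
    _ = exp 1 ^ 2 / √(2 * π) * √(a * b / (a + b)) * (a ^ a * b ^ b / (a + b) ^ (a + b)) *
          (√(2 * π * (a + b : ℕ)) * ((a + b : ℕ) / exp 1) ^ (a + b)) := by
        push_cast
        rw [sqrt_div' _ (by positivity), sqrt_mul (by positivity : (0 : ℝ) ≤ 2 * π),
          sqrt_mul (by positivity : (0 : ℝ) ≤ a)]
        simp only [div_pow, pow_add]
        field_simp
    _ ≤ _ := by gcongr; exact Stirling.le_factorial_stirling _

theorem stirling_ratio_eq (x y : ℝ) (p q : ℕ) (hx : x ≠ 0) (hy : y ≠ 0) (hx1 : x - 1 ≠ 0)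
    (hy1 : y - 1 ≠ 0) (hxy : x + y ≠ 0) :
    x ^ q * y ^ p * ((x + y - 1) ^ (p + q + 1) * ((x - 1) * (y - 1)) ^ (p * q) /
        (x * y) ^ ((p + 1) * (q + 1))) =
      (x / (x - 1)) ^ p * (y / (y - 1)) ^ q * ((x + y - 1) / (x + y)) ^ (p + q + 1) / (x + y) *
        ((1 - 1 / x) ^ ((p + 1) * (q + 1)) * (1 + y / x) ^ (p + 1) *
            (1 - 1 / y) ^ ((p + 1) * (q + 1)) * (1 + x / y) ^ (q + 1) /
          ((1 - 1 / x) ^ (q + 1) * (1 - 1 / y) ^ (p + 1))) := by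
  have e1 : 1 - 1 / x = (x - 1) / x := by field_simp
  have e2 : 1 - 1 / y = (y - 1) / y := by field_simp
  have e3 : 1 + y / x = (x + y) / x := by field_simp
  have e4 : 1 + x / y = (x + y) / y := by field_simp; ring
  rw [e1, e2, e3, e4]
  simp only [div_pow, mul_pow]
  field_simp
  ring

theorem div_sub_one_pow_le_exp {x : ℝ} {p : ℕ} (hp : p ≠ 0) (hx : x = p + 1) :
    (x / (x - 1)) ^ p ≤ exp 1 := by
  have hp' : (p : ℝ) ≠ 0 := by exact_mod_cast hp
  have : x / (x - 1) = 1 + (p : ℝ)⁻¹ := by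
    rw [hx, add_sub_cancel_right, add_div, div_self hp', one_div]
  exact this ▸ one_add_inv_pow_le_exp

theorem stirling_ratio_le {x y : ℝ} {p q : ℕ} (hp : p ≠ 0) (hq : q ≠ 0) (hx : x = p + 1)
    (hy : y = q + 1) :
    x ^ q * y ^ p * (√((x + y - 1) * ((x - 1) * (y - 1)) / (x * y)) *
        ((x + y - 1) ^ (p + q + 1) * ((x - 1) * (y - 1)) ^ (p * q) /
          (x * y) ^ ((p + 1) * (q + 1)))) ≤
      exp 1 ^ 2 * ((1 - 1 / x) ^ ((p + 1) * (q + 1)) * (1 + y / x) ^ (p + 1) *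
          (1 - 1 / y) ^ ((p + 1) * (q + 1)) * (1 + x / y) ^ (q + 1)) /
        ((1 - 1 / x) ^ (q + 1) * (1 - 1 / y) ^ (p + 1) * √(x + y)) := by
  have hx1 : 1 ≤ x - 1 := by
    rw [hx, add_sub_cancel_right]; exact_mod_cast Nat.one_le_iff_ne_zero.mpr hp
  have hy1 : 1 ≤ y - 1 := by
    rw [hy, add_sub_cancel_right]; exact_mod_cast Nat.one_le_iff_ne_zero.mpr hq
  have hx0 : 0 < x := by linarith
  have hy0 : 0 < y := by linarith
  have hx1' : 0 ≤ 1 - 1 / x := by rw [sub_nonneg, div_le_one hx0]; linarith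
  have hy1' : 0 ≤ 1 - 1 / y := by rw [sub_nonneg, div_le_one hy0]; linarith
  set R := (1 - 1 / x) ^ ((p + 1) * (q + 1)) * (1 + y / x) ^ (p + 1) *
      (1 - 1 / y) ^ ((p + 1) * (q + 1)) * (1 + x / y) ^ (q + 1) /
    ((1 - 1 / x) ^ (q + 1) * (1 - 1 / y) ^ (p + 1)) with hR
  have hsqrt : √((x + y - 1) * ((x - 1) * (y - 1)) / (x * y)) ≤ √(x + y) := by
    gcongr
    rw [div_le_iff₀ (by positivity)]
    nlinarith [mul_pos (by linarith : (0 : ℝ) < x - 1) (by linarith : (0 : ℝ) < y - 1)]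
  have hS : ((x + y - 1) / (x + y)) ^ (p + q + 1) ≤ 1 :=
    pow_le_one₀ (div_nonneg (by linarith) (by linarith))
      (by rw [div_le_one (by linarith)]; linarith)
  calc _ = √((x + y - 1) * ((x - 1) * (y - 1)) / (x * y)) *
        ((x / (x - 1)) ^ p * (y / (y - 1)) ^ q * ((x + y - 1) / (x + y)) ^ (p + q + 1) /
          (x + y) * R) := by
        rw [mul_left_comm, stirling_ratio_eq x y p q hx0.ne' hy0.ne' (by linarith) (by linarith)
          (by linarith)]
    _ ≤ √(x + y) * (exp 1 * exp 1 * 1 / (x + y) * R) := by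
        have : 0 ≤ x / (x - 1) := div_nonneg (by linarith) (by linarith)
        have : 0 ≤ y / (y - 1) := div_nonneg (by linarith) (by linarith)
        have : 0 ≤ (x + y - 1) / (x + y) := div_nonneg (by linarith) (by linarith)
        have : 0 ≤ R := by positivity
        gcongr
        · exact div_sub_one_pow_le_exp hp hx
        · exact div_sub_one_pow_le_exp hq hy
    _ = exp 1 ^ 2 * (√(x + y) / (x + y)) * R := by ring
    _ = exp 1 ^ 2 * R / √(x + y) := by rw [sqrt_div_self']; ring
    _ = _ := by rw [hR, mul_div_assoc', div_div]

theorem stmt_5 :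
    ∃ C : ℝ, 0 < C ∧ ∀ m n : ℕ, 2 ≤ m → 2 ≤ n →
      ((m ^ (n - 1) * n ^ (m - 1) : ℕ) : ℝ) / ((m * n).choose (m + n - 1) : ℝ) ≤
        C * ((1 - 1 / (m : ℝ)) ^ (m * n) * (1 + (n : ℝ) / m) ^ m *
              (1 - 1 / (n : ℝ)) ^ (m * n) * (1 + (m : ℝ) / n) ^ n) /
            ((1 - 1 / (m : ℝ)) ^ n * (1 - 1 / (n : ℝ)) ^ m * Real.sqrt (m + n)) := by
  refine ⟨exp 1 ^ 4 / √(2 * π), by positivity, fun m n hm hn => ?_⟩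
  obtain ⟨p, rfl⟩ : ∃ p, m = p + 1 := ⟨m - 1, by omega⟩
  obtain ⟨q, rfl⟩ : ∃ q, n = q + 1 := ⟨n - 1, by omega⟩
  have hp : p ≠ 0 := by omega
  have hq : q ≠ 0 := by omega
  set x : ℝ := ((p + 1 : ℕ) : ℝ) with hx
  set y : ℝ := ((q + 1 : ℕ) : ℝ) with hy
  have hchoose := inv_choose_add_le (a := p + q + 1) (b := p * q) (by omega) (by positivity)
  rw [show p + q + 1 + p * q = (p + 1) * (q + 1) by ring,
    show ((p + q + 1 : ℕ) : ℝ) = x + y - 1 by rw [hx, hy]; push_cast; ring,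
    show ((p * q : ℕ) : ℝ) = (x - 1) * (y - 1) by rw [hx, hy]; push_cast; ring,
    show x + y - 1 + (x - 1) * (y - 1) = x * y by ring] at hchoose
  rw [show p + 1 + (q + 1) - 1 = p + q + 1 by omega, Nat.add_sub_cancel, Nat.add_sub_cancel,
    Nat.cast_mul, Nat.cast_pow, Nat.cast_pow, div_eq_mul_inv]
  have hratio := mul_le_mul_of_nonneg_left
    (stirling_ratio_le hp hq (Nat.cast_succ p) (Nat.cast_succ q))
    (by positivity : (0 : ℝ) ≤ exp 1 ^ 2 / √(2 * π))
  exact (mul_le_mul_of_nonneg_left hchoose (by positivity)).trans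
    (le_of_eq_of_le (by ring) (hratio.trans_eq (by ring)))
end

section
/- Let X₁, Y₁ be finite sets with |X₁| = m₁ and |Y₁| = n₁. If S ⊆ X₁ × Y₁ is a maximal good set (good and not properly contained in any good subset of X₁ × Y₁), then |S| = m₁ + n₁ - 1. -/
def IsGood {X₁ Y₁ : Type*} (S : Set (X₁ × Y₁)) : Prop :=
  ∀ f : X₁ × Y₁ → ℝ, ∃ u : X₁ → ℝ, ∃ v : Y₁ → ℝ, ∀ p ∈ S, f p = u p.1 + v p.2

/-!
Send a pair `p = (x, y)` to its incidence vector `e_x ⊕ e_y`. Pairing with `u ⊕ v` turns a linear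
relation among the incidence vectors of `S` into one among the values `u x + v y` on `S`, and
conversely a functional with prescribed values on an independent family extends to the whole
space; so `S` is good exactly when its incidence vectors are linearly independent. A maximal good
set is then a basis of the span of all incidence vectors. The cross `{x₀} × Y ∪ X × {y₀}` is good
and spans as well, because `e(x, y) = e(x, y₀) + e(x₀, y) - e(x₀, y₀)`, so both have the same
number `m + n - 1` of elements.
-/

open Set Submodule

section LinearAlgebra

variable {ι K V : Type*} [Field K] [AddCommGroup V] [Module K V] {v : ι → V} {s t : Set ι}

theorem LinearIndependent.exists_linearMap_eq {W : Type*} [AddCommGroup W] [Module K W]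
    (hv : LinearIndependent K v) (f : ι → W) : ∃ φ : V →ₗ[K] W, ∀ i, φ (v i) = f i := by
  obtain ⟨φ, hφ⟩ := LinearMap.exists_extend ((Module.Basis.span hv).constr K f)
  refine ⟨φ, fun i => ?_⟩
  have := LinearMap.congr_fun hφ (Module.Basis.span hv i)
  rwa [LinearMap.comp_apply, Module.Basis.constr_basis, Submodule.subtype_apply,
    Module.Basis.span_apply] at this

theorem Maximal.span_image_eq_span_range (hs : Maximal (LinearIndepOn K v) s) :
    span K (v '' s) = span K (range v) := by
  refine le_antisymm (span_mono (image_subset_range v s)) (span_le.2 ?_)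
  rintro _ ⟨i, rfl⟩
  by_contra hi
  have hins := hs.eq_of_subset (hs.prop.insert hi) (subset_insert i s)
  exact hi (subset_span (mem_image_of_mem v (hins ▸ mem_insert i s)))

theorem LinearIndepOn.encard_eq_of_span_image_eq (hs : LinearIndepOn K v s)
    (ht : LinearIndepOn K v t) (hst : span K (v '' s) = span K (v '' t)) :
    s.encard = t.encard := by
  rw [← toENat_rank_span_set hs, hst, toENat_rank_span_set ht]

end LinearAlgebra

section Incidence

variable {X Y : Type*}

noncomputable def incidence (p : X × Y) : (X →₀ ℝ) × (Y →₀ ℝ) :=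
  (Finsupp.single p.1 1, Finsupp.single p.2 1)

noncomputable def pairing (u : X → ℝ) (v : Y → ℝ) : (X →₀ ℝ) × (Y →₀ ℝ) →ₗ[ℝ] ℝ :=
  (Finsupp.linearCombination ℝ u).coprod (Finsupp.linearCombination ℝ v)

@[simp]
theorem pairing_incidence (u : X → ℝ) (v : Y → ℝ) (p : X × Y) :
    pairing u v (incidence p) = u p.1 + v p.2 := by
  simp [pairing, incidence]

theorem IsGood.linearIndepOn_incidence {S : Set (X × Y)} (hS : IsGood S) :
    LinearIndepOn ℝ incidence S := by
  classical
  rw [linearIndepOn_iff]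
  intro l hl hl0
  ext q
  by_cases hq : q ∈ S
  · obtain ⟨u, v, huv⟩ := hS (fun p => if p = q then 1 else 0)
    -- pair the vanishing combination with the `u ⊕ v` representing the indicator of `q`
    have := congrArg (pairing u v) hl0
    rw [Finsupp.apply_linearCombination, map_zero, Finsupp.linearCombination_apply] at this
    rw [Finsupp.sum_congr (g2 := fun p a => a • if p = q then (1 : ℝ) else 0)
      fun p hp => by simp [← huv p ((Finsupp.mem_supported ℝ l).1 hl hp)]] at this
    simpa using this
  · exact (Finsupp.mem_supported' ℝ l).1 hl q hq

theorem LinearIndepOn.isGood_of_incidence {S : Set (X × Y)}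
    (hS : LinearIndepOn ℝ incidence S) : IsGood S := by
  intro f
  obtain ⟨φ, hφ⟩ := hS.linearIndependent.exists_linearMap_eq (fun p => f p)
  refine ⟨fun x => φ (Finsupp.single x 1, 0), fun y => φ (0, Finsupp.single y 1), ?_⟩
  intro p hp
  rw [← map_add, Prod.mk_add_mk, add_zero, zero_add]
  exact (hφ ⟨p, hp⟩).symm

theorem isGood_iff_linearIndepOn_incidence {S : Set (X × Y)} :
    IsGood S ↔ LinearIndepOn ℝ incidence S :=
  ⟨IsGood.linearIndepOn_incidence, LinearIndepOn.isGood_of_incidence⟩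

def cross (x₀ : X) (y₀ : Y) : Set (X × Y) :=
  {x₀} ×ˢ univ ∪ {x₀}ᶜ ×ˢ {y₀}

theorem isGood_cross (x₀ : X) (y₀ : Y) : IsGood (cross x₀ y₀) := by
  intro f
  refine ⟨fun x => f (x, y₀), fun y => f (x₀, y) - f (x₀, y₀), ?_⟩
  rintro ⟨x, y⟩ (⟨rfl, -⟩ | ⟨-, rfl⟩) <;> simp

theorem span_incidence_image_cross (x₀ : X) (y₀ : Y) :
    span ℝ (incidence '' cross x₀ y₀) = span ℝ (range incidence) := by
  have mem (p : X × Y) (hp : p ∈ cross x₀ y₀) : incidence p ∈ span ℝ (incidence '' cross x₀ y₀) :=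
    subset_span (mem_image_of_mem incidence hp)
  refine le_antisymm (span_mono (image_subset_range _ _)) (span_le.2 ?_)
  rintro _ ⟨⟨x, y⟩, rfl⟩
  have hrect : incidence (x, y) = incidence (x, y₀) + incidence (x₀, y) - incidence (x₀, y₀) := by
    simp [incidence]
  rw [hrect]
  refine sub_mem (add_mem (mem _ ?_) (mem _ ?_)) (mem _ ?_) <;>
    by_cases hx : x = x₀ <;> simp [cross, hx]

theorem ncard_cross [Finite X] [Finite Y] (x₀ : X) (y₀ : Y) :
    (cross x₀ y₀).ncard = Nat.card X + Nat.card Y - 1 := by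
  have hdisj : Disjoint ({x₀} ×ˢ univ : Set (X × Y)) ({x₀}ᶜ ×ˢ {y₀}) :=
    disjoint_prod.2 (Or.inl disjoint_compl_right)
  rw [cross, ncard_union_eq hdisj, ncard_prod, ncard_prod, ncard_compl, ncard_univ, ncard_singleton,
    ncard_singleton]
  have : 0 < Nat.card X := Nat.card_pos_iff.2 ⟨⟨x₀⟩, ‹_›⟩
  omega

end Incidence

theorem stmt_7 {X₁ Y₁ : Type*} [Fintype X₁] [Fintype Y₁] [Nonempty X₁] [Nonempty Y₁]
    (S : Set (X₁ × Y₁)) (hS : IsGood S)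
    (hmax : ∀ T : Set (X₁ × Y₁), IsGood T → S ⊆ T → S = T) :
    S.ncard = Fintype.card X₁ + Fintype.card Y₁ - 1 := by
  obtain ⟨x₀⟩ := ‹Nonempty X₁›
  obtain ⟨y₀⟩ := ‹Nonempty Y₁›
  rw [isGood_iff_linearIndepOn_incidence] at hS
  have hSmax : Maximal (LinearIndepOn ℝ incidence) S :=
    ⟨hS, fun T hT hST => (hmax T (isGood_iff_linearIndepOn_incidence.2 hT) hST).ge⟩
  have hcard : S.encard = (cross x₀ y₀).encard :=
    hS.encard_eq_of_span_image_eq (isGood_iff_linearIndepOn_incidence.1 (isGood_cross x₀ y₀))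
      (hSmax.span_image_eq_span_range.trans (span_incidence_image_cross x₀ y₀).symm)
  rw [Fintype.card_eq_nat_card, Fintype.card_eq_nat_card, ← ncard_cross x₀ y₀, ncard_def, ncard_def,
    hcard]
end

section
/- Let X₁, Y₁ be finite sets and S ⊆ X₁ × Y₁. A loop in S is a sequence of distinct points (x₁,y₁),...,(x₂ₖ,y₂ₖ) in S with k ≥ 2 such that consecutive points (cyclically) alternate between sharing the first coordinate and sharing the second coordinate. Then S is good if and only if S contains no loop. -/
/-- `S` has a loop: a cyclic sequence of `2k` distinct points of `S` (`k ≥ 2`) in which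
consecutive points (cyclically) alternately share the first and the second coordinate. -/
def HasLoop {X₁ Y₁ : Type*} (S : Set (X₁ × Y₁)) : Prop :=
  ∃ k : ℕ, 2 ≤ k ∧ ∃ p : ZMod (2 * k) → X₁ × Y₁,
    Function.Injective p ∧ (∀ i, p i ∈ S) ∧
    ∀ i : ZMod (2 * k),
      if (i.val : ℕ) % 2 = 0 then (p i).1 = (p (i + 1)).1 else (p i).2 = (p (i + 1)).2

open Finset

section

variable {X₁ Y₁ : Type*} {S : Set (X₁ × Y₁)}

/-- A loop of length `2 * k` written as a `2 * k`-periodic sequence of points. -/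
structure IsPeriodicLoop (S : Set (X₁ × Y₁)) (k : ℕ) (q : ℕ → X₁ × Y₁) : Prop where
  periodic : Function.Periodic q (2 * k)
  injOn : Set.InjOn q (Set.Iio (2 * k))
  mem : ∀ n, q n ∈ S
  fst_eq : ∀ m, (q (2 * m)).1 = (q (2 * m + 1)).1
  snd_eq : ∀ m, (q (2 * m + 1)).2 = (q (2 * m + 2)).2

theorem hasLoop_iff_exists_isPeriodicLoop :
    HasLoop S ↔ ∃ k, 2 ≤ k ∧ ∃ q, IsPeriodicLoop S k q := by
  constructor
  · rintro ⟨k, hk, p, hinj, hmem, halt⟩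
    have : NeZero (2 * k) := ⟨by omega⟩
    have hval (n : ℕ) : ((n : ZMod (2 * k)).val) % 2 = n % 2 := by
      rw [ZMod.val_natCast, Nat.mod_mod_of_dvd _ (dvd_mul_right 2 k)]
    refine ⟨k, hk, fun n => p n, ⟨fun n => by simp, ?_, fun n => hmem _, fun m => ?_, fun m => ?_⟩⟩
    · intro i hi j hj hij
      have := congrArg ZMod.val (hinj hij)
      rwa [ZMod.val_cast_of_lt hi, ZMod.val_cast_of_lt hj] at this
    · have := halt (2 * m : ℕ)
      rw [if_pos (by rw [hval]; omega)] at this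
      simpa using this
    · have := halt (2 * m + 1 : ℕ)
      rw [if_neg (by rw [hval]; omega)] at this
      simpa [add_assoc, one_add_one_eq_two] using this
  · rintro ⟨k, hk, q, hq⟩
    have : NeZero (2 * k) := ⟨by omega⟩
    refine ⟨k, hk, fun i => q i.val, fun i j h => ZMod.val_injective _ ?_, fun i => hq.mem _,
      fun i => ?_⟩
    · exact hq.injOn (ZMod.val_lt i) (ZMod.val_lt j) h
    · have hsucc : q (i + 1).val = q (i.val + 1) := by
        rw [← ZMod.natCast_zmod_val i, ← Nat.cast_succ, ZMod.val_natCast, ZMod.natCast_zmod_val,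
          hq.periodic.map_mod_nat]
      simp only [hsucc]
      split_ifs with h
      · obtain ⟨m, hm⟩ : ∃ m, i.val = 2 * m := ⟨i.val / 2, by omega⟩
        rw [hm]
        exact hq.fst_eq m
      · obtain ⟨m, hm⟩ : ∃ m, i.val = 2 * m + 1 := ⟨i.val / 2, by omega⟩
        rw [hm]
        exact hq.snd_eq m

theorem HasLoop.mono {T : Set (X₁ × Y₁)} (h : HasLoop S) (hST : S ⊆ T) : HasLoop T := by
  obtain ⟨k, hk, p, hinj, hmem, halt⟩ := h
  exact ⟨k, hk, p, hinj, fun i => hST (hmem i), halt⟩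

namespace IsPeriodicLoop

variable {k : ℕ} {q : ℕ → X₁ × Y₁}

theorem sum_sub_eq_zero (hq : IsPeriodicLoop S k q) {f : X₁ × Y₁ → ℝ} {u : X₁ → ℝ}
    {v : Y₁ → ℝ} (huv : ∀ p ∈ S, f p = u p.1 + v p.2) :
    ∑ m ∈ range k, (f (q (2 * m)) - f (q (2 * m + 1))) = 0 := by
  have hterm (m : ℕ) :
      f (q (2 * m)) - f (q (2 * m + 1)) = v (q (2 * m)).2 - v (q (2 * (m + 1))).2 := by
    rw [huv _ (hq.mem _), huv _ (hq.mem _), hq.fst_eq m, hq.snd_eq m, mul_add_one]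
    ring
  simp only [hterm, sum_range_sub' (fun m => v (q (2 * m)).2), hq.periodic.eq]
  simp

theorem not_isGood (hq : IsPeriodicLoop S k q) (hk : 0 < k) : ¬IsGood S := by
  classical
  intro hS
  obtain ⟨u, v, huv⟩ := hS (fun p => if p = q 0 then 1 else 0)
  have hsum := hq.sum_sub_eq_zero huv
  have hterm : ∀ m ∈ range k,
      ((if q (2 * m) = q 0 then 1 else 0) - (if q (2 * m + 1) = q 0 then 1 else 0) : ℝ) =
        if m = 0 then 1 else 0 := by
    intro m hm
    have hlt : 2 * m + 1 < 2 * k := by rw [mem_range] at hm; omega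
    have heven : q (2 * m) = q 0 ↔ m = 0 := by
      refine ⟨fun h => ?_, by rintro rfl; rfl⟩
      have := hq.injOn (by simp; omega : 2 * m ∈ Set.Iio (2 * k)) (by simp; omega) h
      omega
    have hodd : q (2 * m + 1) ≠ q 0 := fun h => by
      have := hq.injOn (by simpa using hlt : 2 * m + 1 ∈ Set.Iio (2 * k)) (by simp; omega) h
      omega
    simp [heven, hodd]
  rw [sum_congr rfl hterm, sum_ite_eq' (range k) 0] at hsum
  simp [hk] at hsum

end IsPeriodicLoop

theorem not_hasLoop_of_isGood (hS : IsGood S) : ¬HasLoop S := by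
  rw [hasLoop_iff_exists_isPeriodicLoop]
  rintro ⟨k, hk, q, hq⟩
  exact hq.not_isGood (by omega) hS

theorem IsGood.insert_of_forall_fst_ne {p : X₁ × Y₁} (hS : IsGood S) (hp : ∀ q ∈ S, q.1 ≠ p.1) :
    IsGood (insert p S) := by
  classical
  intro f
  obtain ⟨u, v, huv⟩ := hS f
  refine ⟨Function.update u p.1 (f p - v p.2), v, ?_⟩
  rintro q (rfl | hq)
  · simp
  · rw [Function.update_of_ne (hp q hq)]
    exact huv q hq

theorem IsGood.insert_of_forall_snd_ne {p : X₁ × Y₁} (hS : IsGood S) (hp : ∀ q ∈ S, q.2 ≠ p.2) :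
    IsGood (insert p S) := by
  classical
  intro f
  obtain ⟨u, v, huv⟩ := hS f
  refine ⟨u, Function.update v p.2 (f p - u p.1), ?_⟩
  rintro q (rfl | hq)
  · simp
  · rw [Function.update_of_ne (hp q hq)]
    exact huv q hq

theorem not_modEq_add_one {k : ℕ} (hk : 2 ≤ k) (a : ℕ) : ¬a ≡ a + 1 [MOD k] := by
  intro h
  have := (Nat.modEq_iff_dvd' (Nat.le_add_right a 1)).1 h
  simp only [Nat.add_sub_cancel_left, Nat.dvd_one] at this
  omega

theorem hasLoop_of_cycle {k : ℕ} (hk : 2 ≤ k) (xs : ℕ → X₁) (ys : ℕ → Y₁)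
    (hxs : ∀ i j, xs i = xs j ↔ i ≡ j [MOD k]) (hys : ∀ i j, ys i = ys j ↔ i ≡ j [MOD k])
    (hmem : ∀ m, (xs m, ys m) ∈ S) (hmem' : ∀ m, (xs m, ys (m + 1)) ∈ S) : HasLoop S := by
  refine hasLoop_iff_exists_isPeriodicLoop.2
    ⟨k, hk, fun n => (xs (n / 2), ys ((n + 1) / 2)), ⟨fun n => ?_, ?_, fun n => ?_, fun m => ?_,
      fun m => ?_⟩⟩
  · rw [show (n + 2 * k) / 2 = n / 2 + k by omega,
      show (n + 2 * k + 1) / 2 = (n + 1) / 2 + k by omega,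
      (hxs _ _).2 Nat.add_modEq_right, (hys _ _).2 Nat.add_modEq_right]
  · intro i hi j hj hij
    simp only [Prod.mk.injEq, hxs, hys] at hij
    have hhalf : i / 2 = j / 2 := hij.1.eq_of_lt_of_lt (by simp at hi; omega) (by simp at hj; omega)
    by_contra hne
    rcases (by omega : (j + 1) / 2 = (i + 1) / 2 + 1 ∨ (i + 1) / 2 = (j + 1) / 2 + 1) with h | h
    · exact not_modEq_add_one hk _ (h ▸ hij.2)
    · exact not_modEq_add_one hk _ (h ▸ hij.2.symm)
  · rcases Nat.even_or_odd' n with ⟨m, rfl | rfl⟩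
    · simpa [show (2 * m + 1) / 2 = m by omega] using hmem m
    · simpa [show (2 * m + 1) / 2 = m by omega, show (2 * m + 1 + 1) / 2 = m + 1 by omega]
        using hmem' m
  · simp only [show 2 * m / 2 = m by omega, show (2 * m + 1) / 2 = m by omega]
  · simp only [show (2 * m + 1 + 1) / 2 = m + 1 by omega,
      show (2 * m + 2 + 1) / 2 = m + 1 by omega]

section Periodize

variable {α : Type*} {f : ℕ → α} {e : ℕ}

theorem map_add_mod_eq_iff (he : 0 < e) (hmin : ∀ c d, 0 < d → d < e → f (c + d) ≠ f c)
    (b i j : ℕ) : f (b + i % e) = f (b + j % e) ↔ i ≡ j [MOD e] := by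
  refine ⟨fun h => ?_, fun h => congrArg (fun r => f (b + r)) h⟩
  have hi := Nat.mod_lt i he
  have hj := Nat.mod_lt j he
  by_contra hne
  rcases Nat.lt_or_gt_of_ne hne with hlt | hlt
  · exact hmin (b + i % e) (j % e - i % e) (by omega) (by omega)
      (by rw [show b + i % e + (j % e - i % e) = b + j % e by omega]; exact h.symm)
  · exact hmin (b + j % e) (i % e - j % e) (by omega) (by omega)
      (by rw [show b + j % e + (i % e - j % e) = b + i % e by omega]; exact h)

theorem map_add_add_one_mod (he : 0 < e) {b : ℕ} (hb : f (b + e) = f b) (m : ℕ) :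
    f (b + (m + 1) % e) = f (b + m % e + 1) := by
  have hmod : (m + 1) % e = (m % e + 1) % e := by
    conv_lhs => rw [← Nat.div_add_mod m e, add_assoc, Nat.mul_add_mod]
  rcases Nat.lt_or_eq_of_le (Nat.mod_lt m he : m % e + 1 ≤ e) with hlt | heq
  · rw [hmod, Nat.mod_eq_of_lt hlt, add_assoc]
  · rw [hmod, add_assoc, show m % e + 1 = e from heq, Nat.mod_self, add_zero, hb]

end Periodize

theorem hasLoop_of_walk [Finite X₁] (xs : ℕ → X₁) (ys : ℕ → Y₁)
    (hmem : ∀ m, (xs m, ys m) ∈ S) (hmem' : ∀ m, (xs m, ys (m + 1)) ∈ S)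
    (hxs : ∀ m, xs (m + 1) ≠ xs m) (hys : ∀ m, ys (m + 1) ≠ ys m) : HasLoop S := by
  classical
  have hex : ∃ e, 0 < e ∧ ∃ a, xs (a + e) = xs a ∨ ys (a + e) = ys a := by
    obtain ⟨i, j, hij, h⟩ := Finite.exists_ne_map_eq_of_infinite xs
    rcases Nat.lt_or_gt_of_ne hij with hlt | hlt
    · exact ⟨j - i, by omega, i, .inl (by rw [Nat.add_sub_cancel' hlt.le, h])⟩
    · exact ⟨i - j, by omega, j, .inl (by rw [Nat.add_sub_cancel' hlt.le, h])⟩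
  obtain ⟨he, a, ha⟩ := Nat.find_spec hex
  set e := Nat.find hex
  have hmin : ∀ c d, 0 < d → d < e → xs (c + d) ≠ xs c ∧ ys (c + d) ≠ ys c := by
    intro c d hd hde
    have := Nat.find_min hex hde
    push Not at this
    exact this hd c
  have he2 : 2 ≤ e := by
    by_contra h
    rw [show e = 1 by omega] at ha
    exact ha.elim (hxs a) (hys a)
  have hxe := map_add_mod_eq_iff he (fun c d hd hde => (hmin c d hd hde).1)
  have hye := map_add_mod_eq_iff he (fun c d hd hde => (hmin c d hd hde).2)
  rcases ha with hxa | hya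
  · -- the cycle `ys (a + 1), xs (a + 1), …, ys (a + e), xs (a + e) = xs a`
    refine hasLoop_of_cycle he2 (fun m => xs (a + (m + 1) % e)) (fun m => ys (a + 1 + m % e))
      (fun i j => (hxe a _ _).trans ⟨Nat.ModEq.add_right_cancel' 1, Nat.ModEq.add_right 1⟩)
      (hye (a + 1)) (fun m => ?_) (fun m => by rw [add_right_comm]; exact hmem' _)
    rw [map_add_add_one_mod he hxa, add_right_comm]
    exact hmem _
  · refine hasLoop_of_cycle he2 (fun m => xs (a + m % e)) (fun m => ys (a + m % e))
      (hxe a) (hye a) (fun m => hmem _) (fun m => ?_)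
    rw [map_add_add_one_mod he hya]
    exact hmem' _

theorem hasLoop_of_forall_exists_ne [Finite X₁] (hne : S.Nonempty)
    (hrow : ∀ p ∈ S, ∃ q ∈ S, q ≠ p ∧ q.1 = p.1) (hcol : ∀ p ∈ S, ∃ q ∈ S, q ≠ p ∧ q.2 = p.2) :
    HasLoop S := by
  choose! r hrS hrne hr1 using hrow
  choose! c hcS hcne hc2 using hcol
  obtain ⟨p₀, hp₀⟩ := hne
  set pts : ℕ → X₁ × Y₁ := fun m => (c ∘ r)^[m] p₀
  have hpts_succ (m : ℕ) : pts (m + 1) = c (r (pts m)) := Function.iterate_succ_apply' _ _ _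
  have hpts (m : ℕ) : pts m ∈ S := by
    induction m with
    | zero => exact hp₀
    | succ m ih => rw [hpts_succ]; exact hcS _ (hrS _ ih)
  have hrow_step (m : ℕ) : ((pts m).1, (pts (m + 1)).2) = r (pts m) := by
    rw [hpts_succ, hc2 _ (hrS _ (hpts m)), ← hr1 _ (hpts m)]
  refine hasLoop_of_walk (fun m => (pts m).1) (fun m => (pts m).2) (fun m => hpts m)
    (fun m => hrow_step m ▸ hrS _ (hpts m)) (fun m => ?_) (fun m => ?_)
  · intro h
    refine hcne _ (hrS _ (hpts m)) (Prod.ext ?_ (hc2 _ (hrS _ (hpts m))))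
    rw [← hpts_succ, h, hr1 _ (hpts m)]
  · intro h
    refine hrne _ (hpts m) (Prod.ext (hr1 _ (hpts m)) ?_)
    rw [← h, ← congrArg Prod.snd (hrow_step m)]

theorem isGood_of_not_hasLoop [Finite X₁] [Finite Y₁] (h : ¬HasLoop S) : IsGood S := by
  induction S using WellFoundedLT.induction with
  | _ S ih =>
  rcases S.eq_empty_or_nonempty with rfl | hne
  · exact fun f => ⟨0, 0, by simp⟩
  obtain ⟨p, hp, hleaf⟩ :
      ∃ p ∈ S, (∀ q ∈ S, q ≠ p → q.1 ≠ p.1) ∨ (∀ q ∈ S, q ≠ p → q.2 ≠ p.2) := by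
    by_contra! hcon
    exact h (hasLoop_of_forall_exists_ne hne (fun p hp => (hcon p hp).1)
      (fun p hp => (hcon p hp).2))
  have hrest : IsGood (S \ {p}) :=
    ih _ (Set.sdiff_singleton_ssubset.2 hp) fun hl => h (hl.mono Set.sdiff_subset)
  rw [← Set.insert_sdiff_self_of_mem hp]
  rcases hleaf with hrow | hcol
  · exact hrest.insert_of_forall_fst_ne fun q hq => hrow q hq.1 hq.2
  · exact hrest.insert_of_forall_snd_ne fun q hq => hcol q hq.1 hq.2

end

theorem stmt_9 {X₁ Y₁ : Type*} [Finite X₁] [Finite Y₁] (S : Set (X₁ × Y₁)) :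
    IsGood S ↔ ¬ HasLoop S :=
  ⟨not_hasLoop_of_isGood, isGood_of_not_hasLoop⟩
end

section
/- Let a finite group G act on finite sets X and Y, and diagonally on X × Y. If S ⊆ X × Y is a G-invariant G-good set, then for all x ∈ X and y ∈ Y, the intersection S ∩ (G·x × G·y) contains at most one G-orbit. -/
/-- A `G`-invariant set `S ⊆ X × Y` is `G`-good: every `G`-invariant real function on `S`
decomposes as `u x + v y` with `u`, `v` `G`-invariant. -/
def IsGGood (G : Type*) {X Y : Type*} [Group G] [MulAction G X] [MulAction G Y]
    (S : Set (X × Y)) : Prop :=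
  (∀ (g : G), ∀ p ∈ S, g • p ∈ S) ∧
  ∀ f : X × Y → ℝ, (∀ (g : G), ∀ p ∈ S, f (g • p) = f p) →
    ∃ u : X → ℝ, ∃ v : Y → ℝ,
      (∀ (g : G) (x : X), u (g • x) = u x) ∧ (∀ (g : G) (y : Y), v (g • y) = v y) ∧
      ∀ p ∈ S, f p = u p.1 + v p.2

theorem stmt_10 {G X Y : Type*} [Group G] [Finite G] [Finite X] [Finite Y]
    [MulAction G X] [MulAction G Y] (S : Set (X × Y)) (hS : IsGGood G S) :
    ∀ (x : X) (y : Y), ∀ p ∈ S ∩ (MulAction.orbit G x ×ˢ MulAction.orbit G y),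
      ∀ q ∈ S ∩ (MulAction.orbit G x ×ˢ MulAction.orbit G y),
        MulAction.orbit G p = MulAction.orbit G q := by
  classical
  intro x y p hp q hq
  obtain ⟨hpS, hpx, hpy⟩ : _ ∧ _ ∧ _ := ⟨hp.1, hp.2.1, hp.2.2⟩
  obtain ⟨hqS, hqx, hqy⟩ : _ ∧ _ ∧ _ := ⟨hq.1, hq.2.1, hq.2.2⟩
  -- indicator of orbit of p
  set f : X × Y → ℝ := fun r => if r ∈ MulAction.orbit G p then 1 else 0 with hf
  have hinv : ∀ (g : G), ∀ r ∈ S, f (g • r) = f r := by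
    intro g r _
    simp only [hf]
    congr 1
    rw [eq_iff_iff]
    constructor
    · intro h
      have := MulAction.mem_orbit_smul g r
      rw [MulAction.orbit_eq_iff.mpr h] at this
      exact this
    · intro h
      rw [← MulAction.orbit_eq_iff.mpr h]
      exact MulAction.mem_orbit _ g
  obtain ⟨u, v, hu, hv, huv⟩ := hS.2 f hinv
  -- u agrees on orbit x, v on orbit y
  obtain ⟨a, ha⟩ := hpx
  obtain ⟨b, hb⟩ := hqx
  obtain ⟨c, hc⟩ := hpy
  obtain ⟨d, hd⟩ := hqy
  have hu' : u q.1 = u p.1 := by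
    rw [← ha, ← hb, hu, hu]
  have hv' : v q.2 = v p.2 := by
    rw [← hc, ← hd, hv, hv]
  have h1 : f p = 1 := by simp [hf, MulAction.mem_orbit_self]
  have h2 : f q = 1 := by
    rw [huv q hqS, hu', hv', ← huv p hpS, h1]
  have : q ∈ MulAction.orbit G p := by
    by_contra h
    simp [hf, h] at h2
  exact (MulAction.orbit_eq_iff.mpr this).symm
end

section
/- Let a finite group G act on finite sets X and Y. A G-invariant subset S ⊆ X × Y is G-good if and only if the map φ sending each G-orbit G·(x,y) in S to the pair (G·x, G·y) ∈ (X/G) × (Y/G) is injective on the set of orbits in S, and its image is a good subset of (X/G) × (Y/G). -/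
/-- The `G`-good property (for a `G`-invariant set, invariance assumed separately). -/
def GGoodDecomp (G : Type*) {X Y : Type*} [Group G] [MulAction G X] [MulAction G Y]
    (S : Set (X × Y)) : Prop :=
  ∀ f : X × Y → ℝ, (∀ (g : G), ∀ p ∈ S, f (g • p) = f p) →
    ∃ u : X → ℝ, ∃ v : Y → ℝ,
      (∀ (g : G) (x : X), u (g • x) = u x) ∧ (∀ (g : G) (y : Y), v (g • y) = v y) ∧
      ∀ p ∈ S, f p = u p.1 + v p.2

lemma mk_eq_iff_orbit_eq {G X : Type*} [Group G] [MulAction G X] {x y : X} :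
    Quotient.mk (MulAction.orbitRel G X) x = Quotient.mk (MulAction.orbitRel G X) y ↔
      MulAction.orbit G x = MulAction.orbit G y := by
  constructor
  · intro h
    exact MulAction.orbit_eq_iff.mpr (Quotient.exact h)
  · intro h
    exact Quotient.sound (MulAction.orbit_eq_iff.mp h)

theorem stmt_12 {G X Y : Type*} [Group G] [Finite G] [Finite X] [Finite Y]
    [MulAction G X] [MulAction G Y] (S : Set (X × Y))
    (hInv : ∀ (g : G), ∀ p ∈ S, g • p ∈ S) :
    GGoodDecomp G S ↔
      ((∀ p ∈ S, ∀ q ∈ S,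
          MulAction.orbit G p.1 = MulAction.orbit G q.1 →
          MulAction.orbit G p.2 = MulAction.orbit G q.2 →
          MulAction.orbit G p = MulAction.orbit G q) ∧
        IsGood {q : Quotient (MulAction.orbitRel G X) × Quotient (MulAction.orbitRel G Y) |
          ∃ p ∈ S, q = (Quotient.mk (MulAction.orbitRel G X) p.1,
                        Quotient.mk (MulAction.orbitRel G Y) p.2)}) := by
  classical
  constructor
  · intro hG
    constructor
    · -- injectivity of φ
      intro p hp q hq h1 h2
      by_contra hne
      obtain ⟨u, v, hu, hv, hf⟩ := hG (fun r => if r ∈ MulAction.orbit G p then (1:ℝ) else 0)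
        (by
          intro g r _
          have hiff : g • r ∈ MulAction.orbit G p ↔ r ∈ MulAction.orbit G p := by
            constructor
            · rintro ⟨h, hh⟩
              exact ⟨g⁻¹ * h, by show (g⁻¹ * h) • p = r; rw [mul_smul, show h • p = g • r from hh, inv_smul_smul]⟩
            · rintro ⟨h, hh⟩
              exact ⟨g * h, by show (g * h) • p = g • r; rw [mul_smul, show h • p = r from hh]⟩
          simp only [hiff])
      obtain ⟨g, hg⟩ := MulAction.mem_orbit_iff.mp (h1 ▸ MulAction.mem_orbit_self q.1)
      obtain ⟨h, hh⟩ := MulAction.mem_orbit_iff.mp (h2 ▸ MulAction.mem_orbit_self q.2)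
      have hq0 : q ∉ MulAction.orbit G p := fun hq' =>
        hne (MulAction.orbit_eq_iff.mpr hq').symm
      have e1 := hf p hp
      have e2 := hf q hq
      simp only [MulAction.mem_orbit_self, if_true, if_pos] at e1
      simp only [if_neg hq0] at e2
      rw [← hg, ← hh, hu, hv] at e2
      rw [← e2] at e1
      norm_num at e1
    · -- image is good
      intro fbar
      obtain ⟨u, v, hu, hv, hf⟩ := hG
        (fun p => fbar (Quotient.mk (MulAction.orbitRel G X) p.1,
                        Quotient.mk (MulAction.orbitRel G Y) p.2))
        (by
          intro g r _
          have h1 : Quotient.mk (MulAction.orbitRel G X) ((g • r).1)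
              = Quotient.mk (MulAction.orbitRel G X) r.1 :=
            Quotient.sound (MulAction.mem_orbit r.1 g)
          have h2 : Quotient.mk (MulAction.orbitRel G Y) ((g • r).2)
              = Quotient.mk (MulAction.orbitRel G Y) r.2 :=
            Quotient.sound (MulAction.mem_orbit r.2 g)
          simp only [h1, h2])
      refine ⟨Quotient.lift u ?_, Quotient.lift v ?_, ?_⟩
      · rintro a b ⟨g, rfl⟩
        exact hu g b
      · rintro a b ⟨g, rfl⟩
        exact hv g b
      · rintro q ⟨p, hp, rfl⟩
        exact hf p hp
  · rintro ⟨hinj, hgood⟩ f hfInv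
    classical
    set T : Set (Quotient (MulAction.orbitRel G X) × Quotient (MulAction.orbitRel G Y)) :=
      {q | ∃ p ∈ S, q = (Quotient.mk (MulAction.orbitRel G X) p.1,
                         Quotient.mk (MulAction.orbitRel G Y) p.2)} with hT
    set fbar : Quotient (MulAction.orbitRel G X) × Quotient (MulAction.orbitRel G Y) → ℝ :=
      fun q => if h : q ∈ T then f h.choose else 0 with hfbar
    have hfb : ∀ p ∈ S, fbar (Quotient.mk (MulAction.orbitRel G X) p.1,
        Quotient.mk (MulAction.orbitRel G Y) p.2) = f p := by
      intro p hp
      have hmem : (Quotient.mk (MulAction.orbitRel G X) p.1,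
          Quotient.mk (MulAction.orbitRel G Y) p.2) ∈ T := ⟨p, hp, rfl⟩
      rw [hfbar]
      simp only [dif_pos hmem]
      obtain ⟨hp', heq⟩ := hmem.choose_spec
      set p' := hmem.choose
      have h1 : MulAction.orbit G p'.1 = MulAction.orbit G p.1 := by
        rw [← mk_eq_iff_orbit_eq (G := G)]
        exact (congrArg Prod.fst heq).symm
      have h2 : MulAction.orbit G p'.2 = MulAction.orbit G p.2 := by
        rw [← mk_eq_iff_orbit_eq (G := G)]
        exact (congrArg Prod.snd heq).symm
      have horb : MulAction.orbit G p' = MulAction.orbit G p := hinj p' hp' p hp h1 h2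
      obtain ⟨g, hg⟩ := MulAction.mem_orbit_iff.mp (horb ▸ MulAction.mem_orbit_self p')
      rw [← hg]
      exact hfInv g p hp
    obtain ⟨ubar, vbar, hdecomp⟩ := hgood fbar
    refine ⟨fun x => ubar (Quotient.mk (MulAction.orbitRel G X) x),
            fun y => vbar (Quotient.mk (MulAction.orbitRel G Y) y), ?_, ?_, ?_⟩
    · intro g x
      exact congrArg ubar (Quotient.sound (MulAction.mem_orbit x g))
    · intro g y
      exact congrArg vbar (Quotient.sound (MulAction.mem_orbit y g))
    · intro p hp
      rw [← hfb p hp]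
      exact hdecomp _ ⟨p, hp, rfl⟩
end

section
/- Let a finite group G act on finite sets X, Y, and diagonally on X × Y. Let μ₁, μ₂ be G-invariant probability measures of full support on X and Y. A measure μ in K(μ₁,μ₂) is an extreme point of K(μ₁,μ₂) if and only if its support is a G-good set. -/
open Finset

/-- `K (μ₁, μ₂)`: `G`-invariant probability measures on `X × Y` (as weight functions)
with marginals `μ₁`, `μ₂`. -/
def Kset (G : Type*) {X Y : Type*} [Group G] [MulAction G X] [MulAction G Y]
    [Fintype X] [Fintype Y] (μ₁ : X → ℝ) (μ₂ : Y → ℝ) : Set (X × Y → ℝ) :=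
  {w | (∀ p, 0 ≤ w p) ∧ (∀ (g : G) (p : X × Y), w (g • p) = w p) ∧
       (∀ x, ∑ y, w (x, y) = μ₁ x) ∧ (∀ y, ∑ x, w (x, y) = μ₂ y)}

/-!
Extremality of `μ` and `G`-goodness of its support `S` are both equivalent to: the only
`G`-invariant signed weight `d` vanishing off `S` with zero marginals is `d = 0` (`d = ζ μ` in
the paper's characterization). If such a `d ≠ 0` exists, `μ ± ε d ∈ K(μ₁, μ₂)` for small `ε > 0`;
conversely, a nontrivial segment `(a, b)` through `μ` gives `d = a - b`.
If `S` is `G`-good, then `d / μ = u ⊕ v` on `S`, so `∑ d² / μ = ∑ (u ⊕ v) d = 0` by the marginal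
conditions. If it is not, some invariant `f` on `S` is not of the form `u ⊕ v` on `S` even for
non-invariant `u`, `v` (average them over `G`), and a linear functional separating `f` from
these functions, restricted to `S` and averaged over `G`, is a nonzero such `d`.
-/

open Filter Topology

lemma eq_zero_of_add_mem_of_sub_mem_of_mem_extremePoints {E : Type*} [AddCommGroup E]
    [Module ℝ E] {A : Set E} {x v : E} (hx : x ∈ A.extremePoints ℝ) (hadd : x + v ∈ A)
    (hsub : x - v ∈ A) : v = 0 := by
  have hmid : x ∈ openSegment ℝ (x + v) (x - v) :=
    ⟨1 / 2, 1 / 2, by norm_num, by norm_num, by norm_num, by module⟩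
  simpa using hx.2 hadd hsub hmid

lemma exists_pos_mul_abs_le {ι : Type*} [Finite ι] {d w : ι → ℝ} (hw : ∀ i, 0 ≤ w i)
    (hdw : ∀ i, d i ≠ 0 → 0 < w i) : ∃ ε > 0, ∀ i, ε * |d i| ≤ w i := by
  have hev : ∀ i, ∀ᶠ ε in 𝓝[>] (0 : ℝ), ε * |d i| ≤ w i := by
    intro i
    by_cases hdi : d i = 0
    · simp [hdi, hw i]
    · have hlim : Tendsto (fun ε : ℝ => ε * |d i|) (𝓝[>] 0) (𝓝 0) := by
        simpa using (tendsto_id.mul_const |d i|).mono_left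
          (nhdsWithin_le_nhds (a := (0 : ℝ)) (s := Set.Ioi 0))
      exact (hlim.eventually (gt_mem_nhds (hdw i hdi))).mono fun _ h => h.le
  obtain ⟨ε, hε, hεd⟩ := ((eventually_all.2 hev).and self_mem_nhdsWithin).exists
  exact ⟨ε, hεd, hε⟩

section Average

variable {G α : Type*} [Group G] [Fintype G] [MulAction G α]

variable (G) in
noncomputable def average (f : α → ℝ) (a : α) : ℝ :=
  (Fintype.card G : ℝ)⁻¹ * ∑ g : G, f (g • a)

lemma average_smul (f : α → ℝ) (g : G) (a : α) : average G f (g • a) = average G f a := by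
  simp only [average, smul_smul]
  exact congrArg _ (Equiv.sum_comp (Equiv.mulRight g) fun h => f (h • a))

lemma average_eq_self {f : α → ℝ} {a : α} (hf : ∀ g : G, f (g • a) = f a) :
    average G f a = f a := by
  simp [average, hf]

lemma sum_average_mul [Fintype α] (f : α → ℝ) {h : α → ℝ}
    (hh : ∀ (g : G) a, h (g • a) = h a) : ∑ a, average G f a * h a = ∑ a, f a * h a := by
  have hg (g : G) : ∑ a, f (g • a) * h a = ∑ a, f a * h a := by
    simpa only [MulAction.toPerm_apply, hh] using
      Equiv.sum_comp (MulAction.toPerm g) fun a => f a * h a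
  simp only [average, mul_assoc, ← mul_sum, sum_mul]
  rw [sum_comm, sum_congr rfl fun g _ => hg g]
  simp

end Average

section Couplings

variable {G X Y : Type*} [Group G] [MulAction G X] [MulAction G Y]

lemma exists_invariant_split [Fintype G] {S : Set (X × Y)}
    (hS : ∀ (g : G), ∀ p ∈ S, g • p ∈ S) {f : X × Y → ℝ}
    (hf : ∀ (g : G), ∀ p ∈ S, f (g • p) = f p) {u : X → ℝ} {v : Y → ℝ}
    (huv : ∀ p ∈ S, f p = u p.1 + v p.2) :
    ∃ u' : X → ℝ, ∃ v' : Y → ℝ, (∀ (g : G) x, u' (g • x) = u' x) ∧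
      (∀ (g : G) y, v' (g • y) = v' y) ∧ ∀ p ∈ S, f p = u' p.1 + v' p.2 := by
  refine ⟨average G u, average G v, average_smul u, average_smul v, fun p hp => ?_⟩
  calc f p = average G f p := (average_eq_self fun g => hf g p hp).symm
    _ = average G (fun q : X × Y => u q.1 + v q.2) p := by
      simp only [average]
      exact congrArg _ (sum_congr rfl fun g _ => huv _ (hS g p hp))
    _ = average G u p.1 + average G v p.2 := by
      simp [average, sum_add_distrib, mul_add]

variable [Fintype X] [Fintype Y]

lemma sum_add_mul_eq (u : X → ℝ) (v : Y → ℝ) (e : X × Y → ℝ) :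
    ∑ p, (u p.1 + v p.2) * e p = ∑ x, u x * ∑ y, e (x, y) + ∑ y, v y * ∑ x, e (x, y) := by
  simp only [add_mul, sum_add_distrib, mul_sum]
  rw [Fintype.sum_prod_type, Fintype.sum_prod_type_right]

lemma forall_sum_add_mul_eq_zero_iff (e : X × Y → ℝ) :
    (∀ (u : X → ℝ) (v : Y → ℝ), ∑ p, (u p.1 + v p.2) * e p = 0) ↔
      (∀ x, ∑ y, e (x, y) = 0) ∧ ∀ y, ∑ x, e (x, y) = 0 := by
  simp only [sum_add_mul_eq]
  refine ⟨fun h => ⟨fun x => ?_, fun y => ?_⟩, fun ⟨hrow, hcol⟩ u v => by simp [hrow, hcol]⟩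
  · have := h (fun x => ∑ y, e (x, y)) 0
    simp only [Pi.zero_apply, zero_mul, sum_const_zero, add_zero] at this
    exact ((sum_mul_self_eq_zero_iff _ _).1 this) x (mem_univ x)
  · have := h 0 (fun y => ∑ x, e (x, y))
    simp only [Pi.zero_apply, zero_mul, sum_const_zero, zero_add] at this
    exact ((sum_mul_self_eq_zero_iff _ _).1 this) y (mem_univ y)

variable (G X Y) in
def Kdirection : Submodule ℝ (X × Y → ℝ) where
  carrier := {d | (∀ (g : G) p, d (g • p) = d p) ∧
    (∀ x, ∑ y, d (x, y) = 0) ∧ ∀ y, ∑ x, d (x, y) = 0}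
  add_mem' := fun ⟨ha, ha₁, ha₂⟩ ⟨hb, hb₁, hb₂⟩ =>
    ⟨fun g p => by simp [ha, hb], fun x => by simp [sum_add_distrib, ha₁, hb₁],
      fun y => by simp [sum_add_distrib, ha₂, hb₂]⟩
  zero_mem' := ⟨fun _ _ => rfl, fun _ => by simp, fun _ => by simp⟩
  smul_mem' := fun c _ ⟨h, h₁, h₂⟩ =>
    ⟨fun g p => by simp [h], fun x => by simp [← mul_sum, h₁],
      fun y => by simp [← mul_sum, h₂]⟩

lemma average_mem_Kdirection [Fintype G] {e : X × Y → ℝ} (hrow : ∀ x, ∑ y, e (x, y) = 0)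
    (hcol : ∀ y, ∑ x, e (x, y) = 0) : average G e ∈ Kdirection G X Y := by
  refine ⟨average_smul e, fun x => ?_, fun y => ?_⟩
  · have hg (g : G) : ∑ y, e (g • x, g • y) = 0 := by
      simpa only [MulAction.toPerm_apply, hrow] using
        Equiv.sum_comp (MulAction.toPerm g) fun y => e (g • x, y)
    simp only [average, Prod.smul_mk, ← mul_sum]
    rw [sum_comm]
    simp [hg]
  · have hg (g : G) : ∑ x, e (g • x, g • y) = 0 := by
      simpa only [MulAction.toPerm_apply, hcol] using
        Equiv.sum_comp (MulAction.toPerm g) fun x => e (x, g • y)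
    simp only [average, Prod.smul_mk, ← mul_sum]
    rw [sum_comm]
    simp [hg]

variable {μ₁ : X → ℝ} {μ₂ : Y → ℝ} {μ : X × Y → ℝ}

lemma sub_mem_Kdirection {a b : X × Y → ℝ} (ha : a ∈ Kset G μ₁ μ₂) (hb : b ∈ Kset G μ₁ μ₂) :
    a - b ∈ Kdirection G X Y :=
  ⟨fun g p => by simp [ha.2.1, hb.2.1],
    fun x => by simp [sum_sub_distrib, ha.2.2.1, hb.2.2.1],
    fun y => by simp [sum_sub_distrib, ha.2.2.2, hb.2.2.2]⟩

lemma add_mem_Kset {d : X × Y → ℝ} (hμ : μ ∈ Kset G μ₁ μ₂) (hd : d ∈ Kdirection G X Y)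
    (hnonneg : ∀ p, 0 ≤ μ p + d p) : μ + d ∈ Kset G μ₁ μ₂ :=
  ⟨hnonneg, fun g p => by simp [hμ.2.1, hd.1],
    fun x => by simp [sum_add_distrib, hμ.2.2.1, hd.2.1],
    fun y => by simp [sum_add_distrib, hμ.2.2.2, hd.2.2]⟩

lemma eq_zero_of_mem_Kdirection_of_mem_extremePoints
    (hμ : μ ∈ (Kset G μ₁ μ₂).extremePoints ℝ) {d : X × Y → ℝ} (hd : d ∈ Kdirection G X Y)
    (hsupp : ∀ p, μ p = 0 → d p = 0) : d = 0 := by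
  obtain ⟨ε, hε, hεd⟩ :=
    exists_pos_mul_abs_le hμ.1.1 fun p hp => (hμ.1.1 p).lt_of_ne' (mt (hsupp p) hp)
  have hbound (p) : |(ε • d) p| ≤ μ p := by simpa [abs_mul, abs_of_pos hε] using hεd p
  have hadd : μ + ε • d ∈ Kset G μ₁ μ₂ :=
    add_mem_Kset hμ.1 (Submodule.smul_mem _ ε hd) fun p => by
      linarith [neg_abs_le ((ε • d) p), hbound p]
  have hsub : μ - ε • d ∈ Kset G μ₁ μ₂ := by
    rw [sub_eq_add_neg]
    exact add_mem_Kset hμ.1 (Submodule.neg_mem _ (Submodule.smul_mem _ ε hd)) fun p => by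
      simp only [Pi.neg_apply]
      linarith [le_abs_self ((ε • d) p), hbound p]
  have := eq_zero_of_add_mem_of_sub_mem_of_mem_extremePoints hμ hadd hsub
  exact (smul_eq_zero.1 this).resolve_left hε.ne'

lemma mem_extremePoints_Kset_iff (hμ : μ ∈ Kset G μ₁ μ₂) :
    μ ∈ (Kset G μ₁ μ₂).extremePoints ℝ ↔
      ∀ d ∈ Kdirection G X Y, (∀ p, μ p = 0 → d p = 0) → d = 0 := by
  refine ⟨fun hext d => eq_zero_of_mem_Kdirection_of_mem_extremePoints hext, fun h => ⟨hμ, ?_⟩⟩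
  rintro a ha b hb ⟨s, t, hs, ht, hst, rfl⟩
  have hsupp (p) (hp : (s • a + t • b) p = 0) : (a - b) p = 0 := by
    simp only [Pi.add_apply, Pi.smul_apply, smul_eq_mul] at hp
    obtain ⟨ha0, hb0⟩ :=
      (add_eq_zero_iff_of_nonneg (mul_nonneg hs.le (ha.1 p)) (mul_nonneg ht.le (hb.1 p))).1 hp
    simp_all [hs.ne', ht.ne']
  obtain rfl : a = b := sub_eq_zero.1 (h _ (sub_mem_Kdirection ha hb) hsupp)
  rw [← add_smul, hst, one_smul]

lemma eq_zero_of_isGGood (hμ0 : ∀ p, 0 ≤ μ p) (hμ : ∀ (g : G) p, μ (g • p) = μ p)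
    (hgood : IsGGood G {p | μ p ≠ 0}) {d : X × Y → ℝ} (hd : d ∈ Kdirection G X Y)
    (hsupp : ∀ p, μ p = 0 → d p = 0) : d = 0 := by
  obtain ⟨u, v, -, -, huv⟩ :=
    hgood.2 (fun p => d p / μ p) fun g p _ => by simp only [hd.1, hμ]
  have hterm (p) : d p * (d p / μ p) = (u p.1 + v p.2) * d p := by
    by_cases hp : μ p = 0
    · simp [hsupp p hp]
    · rw [← huv p hp, mul_comm]
  have hsum : ∑ p, d p * (d p / μ p) = 0 := by
    simp only [hterm]
    exact (forall_sum_add_mul_eq_zero_iff d).2 hd.2 u v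
  have hnonneg (p) : 0 ≤ d p * (d p / μ p) := by
    rw [← mul_div_assoc]
    exact div_nonneg (mul_self_nonneg _) (hμ0 p)
  funext p
  by_cases hp : μ p = 0
  · exact hsupp p hp
  · simpa [hp] using (sum_eq_zero_iff_of_nonneg fun p _ => hnonneg p).1 hsum p (mem_univ p)

lemma exists_split_of_forall_Kdirection [Fintype G] (hμ : ∀ (g : G) p, μ (g • p) = μ p)
    (h : ∀ d ∈ Kdirection G X Y, (∀ p, μ p = 0 → d p = 0) → d = 0)
    {f : X × Y → ℝ} (hf : ∀ (g : G) p, f (g • p) = f p) (hf0 : ∀ p, μ p = 0 → f p = 0) :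
    ∃ (u : X → ℝ) (v : Y → ℝ), ∀ p, μ p ≠ 0 → f p = u p.1 + v p.2 := by
  classical
  let T : ((X → ℝ) × (Y → ℝ)) →ₗ[ℝ] (X × Y → ℝ) :=
    { toFun := fun uv p => if μ p = 0 then 0 else uv.1 p.1 + uv.2 p.2
      map_add' := fun _ _ => by
        ext p
        simp only [Pi.add_apply, Prod.fst_add, Prod.snd_add]
        split_ifs <;> ring
      map_smul' := fun _ _ => by
        ext p
        simp only [Pi.smul_apply, Prod.smul_fst, Prod.smul_snd, smul_eq_mul, RingHom.id_apply]
        split_ifs <;> ring }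
  suffices hfT : f ∈ LinearMap.range T by
    obtain ⟨⟨u, v⟩, huv⟩ := hfT
    exact ⟨u, v, fun p hp => by simp [← huv, T, hp]⟩
  refine (Subspace.forall_mem_dualAnnihilator_apply_eq_zero_iff _ f).1 fun φ hφ => ?_
  set η : X × Y → ℝ := fun p => φ fun q => if p = q then 1 else 0
  set e : X × Y → ℝ := fun p => if μ p = 0 then 0 else η p
  have hφη (w) : φ w = ∑ p, w p * η p := φ.pi_apply_eq_sum_univ w
  -- `φ ∘ T = 0` says that `e`, the weight vector of `φ` masked to the support, has zero marginals.
  have he : ∀ (u : X → ℝ) (v : Y → ℝ), ∑ p, (u p.1 + v p.2) * e p = 0 := fun u v => by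
    rw [← (Submodule.mem_dualAnnihilator φ).1 hφ _ ⟨(u, v), rfl⟩, hφη]
    refine sum_congr rfl fun p _ => ?_
    by_cases hp : μ p = 0 <;> simp [T, e, hp]
  obtain ⟨hrow, hcol⟩ := (forall_sum_add_mul_eq_zero_iff e).1 he
  have havg : average G e = 0 := h _ (average_mem_Kdirection hrow hcol) fun p hp => by
    simp [average, e, hμ, hp]
  calc φ f = ∑ p, average G e p * f p := by
        rw [sum_average_mul e hf, hφη]
        refine sum_congr rfl fun p _ => ?_
        by_cases hp : μ p = 0 <;> simp [e, hp, hf0, mul_comm]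
    _ = 0 := by simp [havg]

lemma isGGood_support_iff [Finite G] (hμ0 : ∀ p, 0 ≤ μ p)
    (hμ : ∀ (g : G) p, μ (g • p) = μ p) :
    IsGGood G {p | μ p ≠ 0} ↔ ∀ d ∈ Kdirection G X Y, (∀ p, μ p = 0 → d p = 0) → d = 0 := by
  cases nonempty_fintype G
  refine ⟨fun hgood d => eq_zero_of_isGGood hμ0 hμ hgood, fun h => ?_⟩
  have hS (g : G) (p) (hp : p ∈ {p | μ p ≠ 0}) : g • p ∈ {p | μ p ≠ 0} := by
    simpa [hμ] using hp
  refine ⟨hS, fun f hf => ?_⟩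
  classical
  let f' : X × Y → ℝ := fun p => if μ p = 0 then 0 else f p
  have hf' (g : G) (p) : f' (g • p) = f' p := by
    by_cases hp : μ p = 0
    · simp [f', hμ, hp]
    · simp [f', hμ, hp, hf g p hp]
  obtain ⟨u, v, huv⟩ := exists_split_of_forall_Kdirection hμ h hf' fun p hp => by simp [f', hp]
  exact exists_invariant_split hS hf fun p (hp : μ p ≠ 0) => by simpa [f', hp] using huv p hp

end Couplings

theorem stmt_13_general {G X Y : Type*} [Group G] [Finite G] [Fintype X] [Fintype Y]
    [MulAction G X] [MulAction G Y]
    (μ₁ : X → ℝ) (μ₂ : Y → ℝ)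
    (μ : X × Y → ℝ) (hμ : μ ∈ Kset G μ₁ μ₂) :
    μ ∈ Set.extremePoints ℝ (Kset G μ₁ μ₂) ↔ IsGGood G {p | μ p ≠ 0} := by
  rw [mem_extremePoints_Kset_iff hμ, isGGood_support_iff hμ.1 hμ.2.1]

theorem stmt_13 {G X Y : Type*} [Group G] [Finite G] [Fintype X] [Fintype Y]
    [MulAction G X] [MulAction G Y]
    (μ₁ : X → ℝ) (μ₂ : Y → ℝ)
    (h₁pos : ∀ x, 0 < μ₁ x) (h₂pos : ∀ y, 0 < μ₂ y)
    (h₁sum : ∑ x, μ₁ x = 1) (h₂sum : ∑ y, μ₂ y = 1)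
    (h₁inv : ∀ (g : G) (x : X), μ₁ (g • x) = μ₁ x)
    (h₂inv : ∀ (g : G) (y : Y), μ₂ (g • y) = μ₂ y)
    (μ : X × Y → ℝ) (hμ : μ ∈ Kset G μ₁ μ₂) :
    μ ∈ Set.extremePoints ℝ (Kset G μ₁ μ₂) ↔ IsGGood G {p | μ p ≠ 0} :=
  stmt_13_general μ₁ μ₂ μ hμ
end

section
/- Let a finite group G act on finite sets X, Y, with m₁ = |X/G|, n₁ = |Y/G|, m₁₂ = |(X×Y)/G| (for the diagonal action). Then the number of maximal G-good subsets of X × Y is at most C(m₁₂, m₁ + n₁ - 1). -/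
/-!
An invariant set `S ⊆ X × Y` is the preimage of a set `T` of orbits of `X × Y`. An orbit `q`
lying over the pair of orbits `(a, b)` gives the functional `ℓ_q (u, v) = u a + v b` on
`(X/G → ℝ) × (Y/G → ℝ)`, and `S` is `G`-good exactly when `(ℓ_q)_{q ∈ T}` maps onto `ℝ^T`,
i.e. is linearly independent. Maximal good sets therefore correspond to maximal independent
subfamilies of `(ℓ_q)_q`, and all of these have `dim span (ℓ_q)_q = m₁ + n₁ - 1` elements, the
common kernel of the `ℓ_q` being the line through `(1, -1)`. Since `S` is recovered from `T`,
there are at most `C(m₁₂, m₁ + n₁ - 1)` maximal good sets.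
-/

open Module Set Submodule

section LinearAlgebra

variable {K V ι : Type*} [Field K] [AddCommGroup V] [Module K V]

theorem linearIndependent_iff_surjective_pi [Finite ι] {L : ι → Dual K V} :
    LinearIndependent K L ↔ Function.Surjective (LinearMap.pi L) := by
  classical
  have := Fintype.ofFinite ι
  rw [Fintype.linearIndependent_iff]
  constructor
  · intro hL
    rw [← LinearMap.dualMap_injective_iff, ← LinearMap.ker_eq_bot, LinearMap.ker_eq_bot']
    intro φ hφ
    -- `(pi L).dualMap φ = ∑ i, φ eᵢ • L i`
    have h := hL (fun i => φ fun j => if i = j then 1 else 0) (by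
      ext x
      have hx := LinearMap.congr_fun hφ x
      rw [LinearMap.dualMap_apply, LinearMap.pi_apply_eq_sum_univ φ] at hx
      simpa [Pi.single_apply, eq_comm, mul_comm] using hx)
    refine LinearMap.ext fun x => ?_
    simp [LinearMap.pi_apply_eq_sum_univ φ x, h]
  · intro hL c hc i
    obtain ⟨x, hx⟩ := hL (Pi.single i 1)
    have hx' : ∀ j, L j x = Pi.single (M := fun _ => K) i 1 j := congrFun hx
    simpa [hx', Pi.single_apply] using LinearMap.congr_fun hc x

theorem ncard_eq_finrank_span_of_maximal {v : ι → V} {s : Set ι}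
    (hs : Maximal (LinearIndepOn K v) s) :
    s.ncard = finrank K (span K (range v)) := by
  have hspan : span K (v '' s) = span K (range v) := by
    refine le_antisymm (span_mono (image_subset_range v s)) (span_le.mpr ?_)
    rintro - ⟨i, rfl⟩
    by_contra hi
    obtain ⟨hins, his⟩ := hs.prop.notMem_span_iff.mp hi
    exact his (hs.le_of_ge hins (subset_insert i s) (mem_insert i s))
  have := rank_span hs.prop
  rw [← hspan, image_eq_range, finrank, this, ← Nat.card_coe_set_eq]
  exact Nat.card_congr (Equiv.ofInjective _ hs.prop.injective)

end LinearAlgebra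

section SumDual

variable (K : Type*) {A B : Type*}

def sumDual [CommSemiring K] (a : A) (b : B) : Dual K ((A → K) × (B → K)) :=
  (LinearMap.proj a : (A → K) →ₗ[K] K) ∘ₗ LinearMap.fst K _ _ +
    (LinearMap.proj b : (B → K) →ₗ[K] K) ∘ₗ LinearMap.snd K _ _

@[simp] theorem sumDual_apply [CommSemiring K] (a : A) (b : B) (w : (A → K) × (B → K)) :
    sumDual K a b w = w.1 a + w.2 b := rfl

theorem finrank_span_range_sumDual [Field K] [Finite A] [Finite B] [Nonempty A] [Nonempty B] :
    finrank K (span K (range fun ab : A × B => sumDual K ab.1 ab.2)) =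
      Nat.card A + Nat.card B - 1 := by
  have := Fintype.ofFinite A
  have := Fintype.ofFinite B
  obtain ⟨a₀⟩ := ‹Nonempty A›
  obtain ⟨b₀⟩ := ‹Nonempty B›
  set w₀ : (A → K) × (B → K) := (fun _ => 1, fun _ => -1)
  have hw₀ : w₀ ≠ 0 := fun h => by simpa [w₀] using congrFun (congrArg Prod.fst h) a₀
  have hco : (span K (range fun ab : A × B => sumDual K ab.1 ab.2)).dualCoannihilator =
      K ∙ w₀ := by
    refine SetLike.ext' ?_
    rw [coe_dualCoannihilator_span]
    ext w
    simp only [forall_mem_range, Prod.forall, sumDual_apply, mem_ofPred_eq, SetLike.mem_coe,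
      mem_span_singleton]
    constructor
    · intro hw
      refine ⟨w.1 a₀, Prod.ext (funext fun a => ?_) (funext fun b => ?_)⟩
      · simp only [w₀, Prod.smul_fst, Pi.smul_apply, smul_eq_mul, mul_one]
        linear_combination hw a₀ b₀ - hw a b₀
      · simp only [w₀, Prod.smul_snd, Pi.smul_apply, smul_eq_mul, mul_neg, mul_one]
        linear_combination -hw a₀ b
    · rintro ⟨c, rfl⟩ a b
      simp [w₀]
  have hsum := Subspace.finrank_add_finrank_dualCoannihilator_eq
    (span K (range fun ab : A × B => sumDual K ab.1 ab.2))
  rw [hco, finrank_span_singleton hw₀, finrank_prod, finrank_fintype_fun_eq_card,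
    finrank_fintype_fun_eq_card] at hsum
  rw [Nat.card_eq_fintype_card, Nat.card_eq_fintype_card]
  omega

end SumDual

open MulAction

section Orbits

variable (G : Type*) {X Y : Type*} [Group G] [MulAction G X] [MulAction G Y]

def orbitDual : orbitRel.Quotient G (X × Y) →
    Dual ℝ ((orbitRel.Quotient G X → ℝ) × (orbitRel.Quotient G Y → ℝ)) :=
  Quotient.lift (fun p => sumDual ℝ (Quotient.mk _ p.1) (Quotient.mk _ p.2)) <| by
    rintro _ p ⟨g, rfl⟩
    simp only [Prod.smul_fst, Prod.smul_snd, orbitRel.Quotient.quotient_smul_eq]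

theorem orbitDual_mk (p : X × Y) :
    orbitDual G (Quotient.mk _ p) = sumDual ℝ (Quotient.mk _ p.1) (Quotient.mk _ p.2) := rfl

theorem range_orbitDual :
    range (orbitDual G (X := X) (Y := Y)) =
      range fun ab : orbitRel.Quotient G X × orbitRel.Quotient G Y => sumDual ℝ ab.1 ab.2 := by
  ext φ
  constructor
  · rintro ⟨q, rfl⟩
    induction q using Quotient.inductionOn with
    | h p => exact ⟨(Quotient.mk _ p.1, Quotient.mk _ p.2), rfl⟩
  · rintro ⟨⟨a, b⟩, rfl⟩
    induction a, b using Quotient.inductionOn₂ with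
    | h x y => exact ⟨Quotient.mk _ (x, y), rfl⟩

theorem isGGood_preimage_iff [Finite X] [Finite Y] (T : Set (orbitRel.Quotient G (X × Y))) :
    IsGGood G (Quotient.mk _ ⁻¹' T) ↔ LinearIndepOn ℝ (orbitDual G) T := by
  classical
  have hinv : ∀ (g : G), ∀ p ∈ Quotient.mk _ ⁻¹' T, g • p ∈ Quotient.mk _ ⁻¹' T := by
    intro g p hp
    rwa [mem_preimage, orbitRel.Quotient.quotient_smul_eq]
  rw [LinearIndepOn, linearIndependent_iff_surjective_pi, IsGGood, and_iff_right hinv]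
  constructor
  · intro hgood c
    obtain ⟨u, v, hu, hv, huv⟩ :=
      hgood (fun p => if hp : Quotient.mk _ p ∈ T then c ⟨_, hp⟩ else 0) (by
        intro g p _
        simp only [orbitRel.Quotient.quotient_smul_eq])
    refine ⟨(Quotient.lift u ?_, Quotient.lift v ?_), ?_⟩
    · rintro _ x ⟨g, rfl⟩; exact hu g x
    · rintro _ y ⟨g, rfl⟩; exact hv g y
    funext ⟨q, hq⟩
    induction q using Quotient.inductionOn with
    | h p => simpa [orbitDual_mk, hq] using (huv p hq).symm
  · intro hsurj f hf
    obtain ⟨w, hw⟩ := hsurj fun q => f q.1.out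
    refine ⟨fun x => w.1 (Quotient.mk _ x), fun y => w.2 (Quotient.mk _ y), ?_, ?_, ?_⟩
    · intro g x; simp only [orbitRel.Quotient.quotient_smul_eq]
    · intro g y; simp only [orbitRel.Quotient.quotient_smul_eq]
    intro p hp
    obtain ⟨g, hg⟩ : (Quotient.mk _ p).out ∈ orbit G p := Quotient.mk_out (s := orbitRel G _) p
    have := congrFun hw ⟨_, hp⟩
    simp only [LinearMap.pi_apply, orbitDual_mk, sumDual_apply, ← hg, hf g p hp] at this
    exact this.symm

theorem preimage_image_orbitRel_mk {α : Type*} [MulAction G α] {S : Set α}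
    (hS : ∀ g : G, ∀ p ∈ S, g • p ∈ S) :
    Quotient.mk (orbitRel G α) ⁻¹' (Quotient.mk _ '' S) = S := by
  refine Subset.antisymm ?_ (subset_preimage_image _ _)
  rintro p ⟨q, hq, hqp⟩
  obtain ⟨g, rfl⟩ := Quotient.exact hqp.symm
  exact hS g q hq

theorem maximal_linearIndepOn_of_maximal_isGGood [Finite X] [Finite Y] {S : Set (X × Y)}
    (hS : IsGGood G S) (hmax : ∀ T, IsGGood G T → S ⊆ T → S = T) :
    Maximal (LinearIndepOn ℝ (orbitDual G)) (Quotient.mk _ '' S) := by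
  have hpre := preimage_image_orbitRel_mk G hS.1
  refine ⟨(isGGood_preimage_iff G _).mp (by rwa [hpre]), fun T hT hST => ?_⟩
  have hST' := hmax _ ((isGGood_preimage_iff G T).mpr hT) (hpre ▸ preimage_mono hST)
  rw [hST', image_preimage_eq T Quotient.mk_surjective]

theorem ncard_image_of_maximal_isGGood [Finite X] [Finite Y] [Nonempty X] [Nonempty Y]
    {S : Set (X × Y)} (hS : IsGGood G S) (hmax : ∀ T, IsGGood G T → S ⊆ T → S = T) :
    (Quotient.mk (orbitRel G (X × Y)) '' S).ncard =
      Nat.card (orbitRel.Quotient G X) + Nat.card (orbitRel.Quotient G Y) - 1 := by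
  have : Nonempty (orbitRel.Quotient G X) := ‹Nonempty X›.map (Quotient.mk _)
  have : Nonempty (orbitRel.Quotient G Y) := ‹Nonempty Y›.map (Quotient.mk _)
  rw [ncard_eq_finrank_span_of_maximal (maximal_linearIndepOn_of_maximal_isGGood G hS hmax),
    range_orbitDual, finrank_span_range_sumDual]

end Orbits

theorem stmt_15_general {G X Y : Type*} [Group G] [Finite X] [Finite Y]
    [MulAction G X] [MulAction G Y] [Nonempty X] [Nonempty Y] :
    {S : Set (X × Y) | IsGGood G S ∧
        ∀ T : Set (X × Y), IsGGood G T → S ⊆ T → S = T}.ncard ≤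
      (Nat.card (Quotient (MulAction.orbitRel G (X × Y)))).choose
        (Nat.card (Quotient (MulAction.orbitRel G X)) +
          Nat.card (Quotient (MulAction.orbitRel G Y)) - 1) := by
  calc _ ≤ (Set.powersetCard (orbitRel.Quotient G (X × Y))
          (Nat.card (orbitRel.Quotient G X) + Nat.card (orbitRel.Quotient G Y) - 1)).ncard := by
        refine ncard_le_ncard_of_injOn (fun S => (toFinite (Quotient.mk _ '' S)).toFinset)
          ?_ ?_ (toFinite _)
        · rintro S ⟨hS, hmax⟩
          rw [Set.powersetCard.mem_iff, ← ncard_eq_toFinset_card]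
          exact ncard_image_of_maximal_isGGood G hS hmax
        · rintro S₁ ⟨hS₁, -⟩ S₂ ⟨hS₂, -⟩ h
          rw [← preimage_image_orbitRel_mk G hS₁.1, ← preimage_image_orbitRel_mk G hS₂.1,
            Finite.toFinset_inj.mp h]
    _ = _ := by rw [← Nat.card_coe_set_eq, Set.powersetCard.card]

theorem stmt_15 {G X Y : Type*} [Group G] [Finite G] [Finite X] [Finite Y]
    [MulAction G X] [MulAction G Y] [Nonempty X] [Nonempty Y] :
    {S : Set (X × Y) | IsGGood G S ∧
        ∀ T : Set (X × Y), IsGGood G T → S ⊆ T → S = T}.ncard ≤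
      (Nat.card (Quotient (MulAction.orbitRel G (X × Y)))).choose
        (Nat.card (Quotient (MulAction.orbitRel G X)) +
          Nat.card (Quotient (MulAction.orbitRel G Y)) - 1) :=
  stmt_15_general
end

section
/- Let a finite group G act on finite sets X, Y with μ₁, μ₂ G-invariant fully supported probability measures, m₁ = |X/G|, n₁ = |Y/G|, m₁₂ = |(X×Y)/G|. Then the number of extreme points of K(μ₁,μ₂) is at most C(m₁₂, m₁+n₁-1). -/
/-!
Invariant functions on `X × Y` are the functions on the set `Q` of orbits, so `K(μ₁, μ₂)` is the
polytope `{c ≥ 0 | A c = (μ₁, μ₂)}` in `ℝ^Q`, where `A` takes marginals. At an extreme point `c`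
the columns of `A` indexed by the support of `c` are linearly independent (otherwise `c ± ε d`
stays in the polytope for a kernel vector `d` supported there), and `c` is the only point of the
polytope supported in any independent set of columns containing its support. Extending the
support to a basis of the column space therefore assigns to each extreme point a `rank A`-subset
of `Q`, injectively. The range of `A` consists of the pairs of invariant functions with equal
total mass, so `rank A = m₁ + n₁ - 1`.
-/

open Finset

section StandardForm

variable {ι M : Type*} [AddCommGroup M] [Module ℝ M]

theorem LinearIndepOn.exists_superset_ncard_eq_finrank [Finite ι] {v : ι → M} {s : Set ι}
    (hs : LinearIndepOn ℝ v s) :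
    ∃ t, s ⊆ t ∧ LinearIndepOn ℝ v t ∧
      t.ncard = Module.finrank ℝ (Submodule.span ℝ (Set.range v)) := by
  have ht := hs.linearIndepOn_extend (Set.subset_univ s)
  have : Fintype (v '' hs.extend (Set.subset_univ s)) := Fintype.ofFinite _
  refine ⟨_, hs.subset_extend _, ht, ?_⟩
  rw [← Set.image_univ, ← hs.span_image_extend_eq_span_image (Set.subset_univ s),
    finrank_span_set_eq_card ht.id_image,
    ← Set.ncard_eq_toFinset_card', ht.injOn.ncard_image]

variable [Fintype ι]

theorem LinearMap.apply_eq_sum_smul_apply_single [DecidableEq ι] (A : (ι → ℝ) →ₗ[ℝ] M)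
    (c : ι → ℝ) :
    A c = ∑ i, c i • A (Pi.single i 1) := by
  conv_lhs => rw [pi_eq_sum_univ' c]
  simp only [map_sum, map_smul]

theorem LinearMap.range_eq_span_apply_single [DecidableEq ι] (A : (ι → ℝ) →ₗ[ℝ] M) :
    LinearMap.range A = Submodule.span ℝ (Set.range fun i => A (Pi.single i 1)) := by
  refine le_antisymm ?_ (Submodule.span_le.mpr ?_)
  · rintro _ ⟨c, rfl⟩
    rw [A.apply_eq_sum_smul_apply_single]
    exact Submodule.sum_mem _ fun i _ => Submodule.smul_mem _ _ (Submodule.subset_span ⟨i, rfl⟩)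
  · rintro _ ⟨i, rfl⟩
    exact ⟨_, rfl⟩

theorem LinearMap.apply_eq_sum_subtype_of_support_subset [DecidableEq ι] (A : (ι → ℝ) →ₗ[ℝ] M)
    {s : Set ι} [DecidablePred (· ∈ s)] {d : ι → ℝ} (hd : Function.support d ⊆ s) :
    A d = ∑ i : s, d i • A (Pi.single i 1) := by
  rw [A.apply_eq_sum_smul_apply_single, ← Fintype.sum_subtype_add_sum_subtype (· ∈ s),
    Fintype.sum_eq_zero (fun i : {i // i ∉ s} => d i • A (Pi.single i 1)) fun i => ?_, add_zero]
  rw [Function.notMem_support.mp fun h => i.2 (hd h), zero_smul]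

theorem LinearMap.linearIndepOn_apply_single_iff [DecidableEq ι] (A : (ι → ℝ) →ₗ[ℝ] M)
    (s : Set ι) :
    LinearIndepOn ℝ (fun i => A (Pi.single i 1)) s ↔
      ∀ d, A d = 0 → Function.support d ⊆ s → d = 0 := by
  classical
  rw [LinearIndepOn, Fintype.linearIndependent_iff]
  constructor
  · intro h d hd hds
    funext i
    by_cases hi : i ∈ s
    · exact h (fun j => d j) (by rw [← A.apply_eq_sum_subtype_of_support_subset hds, hd]) ⟨i, hi⟩
    · exact Function.notMem_support.mp fun h => hi (hds h)
  · intro h g hg i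
    set d : ι → ℝ := fun j => if hj : j ∈ s then g ⟨j, hj⟩ else 0
    have hds : Function.support d ⊆ s := fun j hj => by
      by_contra hjs
      exact hj (dif_neg hjs)
    have hd : A d = 0 := by
      rw [A.apply_eq_sum_subtype_of_support_subset hds, ← hg]
      exact Finset.sum_congr rfl fun j _ => by simp [d]
    simpa [d] using congrFun (h d hd hds) i

def nonnegSolutions (A : (ι → ℝ) →ₗ[ℝ] M) (b : M) : Set (ι → ℝ) := {c | 0 ≤ c ∧ A c = b}

variable {A : (ι → ℝ) →ₗ[ℝ] M} {b : M}

theorem eq_of_mem_nonnegSolutions_of_support_subset [DecidableEq ι] {c c' : ι → ℝ}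
    (hc : c ∈ nonnegSolutions A b) (hc' : c' ∈ nonnegSolutions A b) {t : Set ι}
    (ht : LinearIndepOn ℝ (fun i => A (Pi.single i 1)) t)
    (hct : Function.support c ⊆ t) (hct' : Function.support c' ⊆ t) : c = c' :=
  sub_eq_zero.mp <| (A.linearIndepOn_apply_single_iff t).mp ht (c - c')
    (by rw [map_sub, hc.2, hc'.2, sub_self])
    ((Function.support_sub c c').trans (Set.union_subset hct hct'))

theorem linearIndepOn_support_of_mem_extremePoints [DecidableEq ι] {c : ι → ℝ}
    (hc : c ∈ Set.extremePoints ℝ (nonnegSolutions A b)) :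
    LinearIndepOn ℝ (fun i => A (Pi.single i 1)) (Function.support c) := by
  obtain ⟨⟨hc0, hcb⟩, hext⟩ := mem_extremePoints.mp hc
  rw [A.linearIndepOn_apply_single_iff]
  intro d hd hdc
  have hnear : ∀ᶠ t in nhds (0 : ℝ), 0 ≤ c + t • d := by
    simp only [Pi.le_def, Filter.eventually_all]
    intro i
    by_cases hi : d i = 0
    · exact Filter.Eventually.of_forall fun t => by simpa [hi] using hc0 i
    · have hci : 0 < c i := (hc0 i).lt_of_ne' (hdc hi)
      have hlim : Filter.Tendsto (fun t : ℝ => c i + t * d i) (nhds 0) (nhds (c i)) :=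
        (by fun_prop : Continuous fun t : ℝ => c i + t * d i).tendsto' 0 (c i) (by simp)
      exact (hlim.eventually_const_lt hci).mono fun t ht => by simpa using ht.le
  obtain ⟨ε, hε, hball⟩ := Metric.eventually_nhds_iff.mp hnear
  have hmem : ∀ t : ℝ, |t| < ε → c + t • d ∈ nonnegSolutions A b := fun t htε =>
    ⟨hball (by simpa using htε), by rw [map_add, map_smul, hd, smul_zero, add_zero, hcb]⟩
  have hε2 : |ε / 2| < ε := by rw [abs_of_pos (half_pos hε)]; exact half_lt_self hε
  have hseg : c ∈ openSegment ℝ (c + (ε / 2) • d) (c + (-(ε / 2)) • d) :=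
    ⟨1 / 2, 1 / 2, by norm_num, by norm_num, by norm_num, by module⟩
  have hfix := (hext _ (hmem _ hε2) _ (hmem _ (by rwa [abs_neg])) hseg).1
  rw [add_eq_left, smul_eq_zero] at hfix
  exact hfix.resolve_left (half_pos hε).ne'

theorem ncard_extremePoints_nonnegSolutions_le :
    (Set.extremePoints ℝ (nonnegSolutions A b)).ncard ≤
      (Nat.card ι).choose (Module.finrank ℝ (LinearMap.range A)) := by
  classical
  have hbasis : ∀ c ∈ Set.extremePoints ℝ (nonnegSolutions A b), ∃ t,
      Function.support c ⊆ t ∧ LinearIndepOn ℝ (fun i => A (Pi.single i 1)) t ∧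
        t.ncard = Module.finrank ℝ (LinearMap.range A) := fun c hc => by
    rw [A.range_eq_span_apply_single]
    exact (linearIndepOn_support_of_mem_extremePoints hc).exists_superset_ncard_eq_finrank
  choose! T hsupp hindep hcard using hbasis
  calc (Set.extremePoints ℝ (nonnegSolutions A b)).ncard
      ≤ (↑(powersetCard (Module.finrank ℝ (LinearMap.range A)) (univ : Finset ι)) :
          Set (Finset ι)).ncard := by
        refine Set.ncard_le_ncard_of_injOn (fun c => (T c).toFinset) (fun c hc => ?_) ?_
        · rw [Finset.mem_coe, mem_powersetCard, ← Set.ncard_eq_toFinset_card', hcard c hc]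
          exact ⟨subset_univ _, rfl⟩
        · intro c hc c' hc' hTT
          have hTT : T c = T c' := by simpa using hTT
          exact eq_of_mem_nonnegSolutions_of_support_subset (extremePoints_subset hc)
            (extremePoints_subset hc') (hindep c hc) (hsupp c hc) (hTT ▸ hsupp c' hc')
    _ = (Nat.card ι).choose (Module.finrank ℝ (LinearMap.range A)) := by
        rw [Set.ncard_coe_finset, card_powersetCard, card_univ, Nat.card_eq_fintype_card]

end StandardForm

theorem Set.image_extremePoints_of_injective {𝕜 E F : Type*} [Ring 𝕜] [PartialOrder 𝕜]
    [IsOrderedRing 𝕜] [AddCommGroup E] [Module 𝕜 E] [AddCommGroup F] [Module 𝕜 F]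
    (f : E →ₗ[𝕜] F) (hf : Function.Injective f) (s : Set E) :
    f '' extremePoints 𝕜 s = extremePoints 𝕜 (f '' s) := by
  ext y
  have hseg : ∀ x₁ x₂, f '' openSegment 𝕜 x₁ x₂ = openSegment 𝕜 (f x₁) (f x₂) :=
    image_openSegment _ f.toAffineMap
  constructor
  · rintro ⟨x, hx, rfl⟩
    refine mem_extremePoints.mpr ⟨Set.mem_image_of_mem f (extremePoints_subset hx), ?_⟩
    rintro _ ⟨x₁, hx₁, rfl⟩ _ ⟨x₂, hx₂, rfl⟩ hxseg
    rw [← hseg, hf.mem_set_image] at hxseg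
    obtain ⟨h₁, h₂⟩ := (mem_extremePoints.mp hx).2 x₁ hx₁ x₂ hx₂ hxseg
    exact ⟨congrArg f h₁, congrArg f h₂⟩
  · intro hy
    obtain ⟨⟨x, hx, rfl⟩, hext⟩ := mem_extremePoints.mp hy
    refine ⟨x, mem_extremePoints.mpr ⟨hx, fun x₁ hx₁ x₂ hx₂ hxseg => ?_⟩, rfl⟩
    have := hext _ (mem_image_of_mem f hx₁) _ (mem_image_of_mem f hx₂)
      (hseg x₁ x₂ ▸ mem_image_of_mem f hxseg)
    exact ⟨hf this.1, hf this.2⟩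

namespace MulAction

variable {G : Type*} [Group G]

theorem exists_comp_mk_eq_of_smul_eq {Z β : Type*} [MulAction G Z] {F : Z → β}
    (hF : ∀ (g : G) z, F (g • z) = F z) :
    ∃ c : orbitRel.Quotient G Z → β, ∀ z, c (Quotient.mk _ z) = F z :=
  ⟨Quotient.lift F (by rintro _ z ⟨g, rfl⟩; exact hF g z), fun _ => rfl⟩

theorem quotient_mk_smul {Z : Type*} [MulAction G Z] (g : G) (z : Z) :
    Quotient.mk (orbitRel G Z) (g • z) = Quotient.mk _ z :=
  Quotient.sound (mem_orbit z g)

variable (G) in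
abbrev orbitFunLeft (Z : Type*) [MulAction G Z] : (orbitRel.Quotient G Z → ℝ) →ₗ[ℝ] (Z → ℝ) :=
  LinearMap.funLeft ℝ ℝ (Quotient.mk _)

theorem orbitFunLeft_injective (Z : Type*) [MulAction G Z] :
    Function.Injective (orbitFunLeft G Z) :=
  LinearMap.funLeft_injective_of_surjective _ _ _ Quotient.mk_surjective

end MulAction

section Coupling

open MulAction

variable {G X Y : Type*} [Group G] [MulAction G X] [MulAction G Y] [Fintype X] [Fintype Y]

variable (X Y) in
def marginals : (X × Y → ℝ) →ₗ[ℝ] (X → ℝ) × (Y → ℝ) :=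
  (LinearMap.pi fun x => ∑ y, LinearMap.proj (x, y)).prod
    (LinearMap.pi fun y => ∑ x, LinearMap.proj (x, y))

@[simp]
theorem marginals_apply (w : X × Y → ℝ) :
    marginals X Y w = (fun x => ∑ y, w (x, y), fun y => ∑ x, w (x, y)) := by
  ext <;> simp [marginals]

theorem Kset_eq_image_nonnegSolutions (μ₁ : X → ℝ) (μ₂ : Y → ℝ) :
    Kset G μ₁ μ₂ = orbitFunLeft G (X × Y) ''
      nonnegSolutions (marginals X Y ∘ₗ orbitFunLeft G (X × Y)) (μ₁, μ₂) := by
  ext w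
  constructor
  · rintro ⟨hpos, hinv, hμ₁, hμ₂⟩
    obtain ⟨c, hc⟩ := exists_comp_mk_eq_of_smul_eq hinv
    have hcw : orbitFunLeft G (X × Y) c = w := funext hc
    refine ⟨c, ⟨fun q => ?_, ?_⟩, hcw⟩
    · induction q using Quotient.ind with
      | _ p => exact (hc p).symm ▸ hpos p
    · rw [LinearMap.comp_apply, hcw, marginals_apply]
      exact Prod.ext (funext hμ₁) (funext hμ₂)
  · rintro ⟨c, ⟨hc, hcμ⟩, rfl⟩
    rw [LinearMap.comp_apply, marginals_apply, Prod.mk.injEq, funext_iff, funext_iff] at hcμ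
    refine ⟨fun p => hc _, fun g p => ?_, hcμ.1, hcμ.2⟩
    exact congrArg c (quotient_mk_smul g p)

variable (G X Y) in
def orbitSumDiff :
    (orbitRel.Quotient G X → ℝ) × (orbitRel.Quotient G Y → ℝ) →ₗ[ℝ] ℝ :=
  (∑ x : X, LinearMap.proj (Quotient.mk _ x)) ∘ₗ LinearMap.fst ℝ _ _ -
    (∑ y : Y, LinearMap.proj (Quotient.mk _ y)) ∘ₗ LinearMap.snd ℝ _ _

@[simp]
theorem orbitSumDiff_apply (a : orbitRel.Quotient G X → ℝ) (b : orbitRel.Quotient G Y → ℝ) :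
    orbitSumDiff G X Y (a, b) = ∑ x, a (Quotient.mk _ x) - ∑ y, b (Quotient.mk _ y) := by
  simp [orbitSumDiff]

theorem finrank_ker_orbitSumDiff [Nonempty X] :
    Module.finrank ℝ (LinearMap.ker (orbitSumDiff G X Y)) =
      Nat.card (orbitRel.Quotient G X) + Nat.card (orbitRel.Quotient G Y) - 1 := by
  classical
  have hne : orbitSumDiff G X Y ≠ 0 := fun h => by
    simpa using LinearMap.congr_fun h (1, 0)
  have := Module.Dual.finrank_ker_add_one_of_ne_zero hne
  rw [Module.finrank_prod, Module.finrank_pi, Module.finrank_pi, ← Nat.card_eq_fintype_card,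
    ← Nat.card_eq_fintype_card] at this
  omega

theorem range_marginals_comp_orbitFunLeft [Nonempty X] [Nonempty Y] :
    LinearMap.range (marginals X Y ∘ₗ orbitFunLeft G (X × Y)) =
      (LinearMap.ker (orbitSumDiff G X Y)).map
        ((orbitFunLeft G X).prodMap (orbitFunLeft G Y)) := by
  apply le_antisymm
  · rintro _ ⟨c, rfl⟩
    obtain ⟨a, ha⟩ := exists_comp_mk_eq_of_smul_eq (F := fun x => ∑ y, c (Quotient.mk _ (x, y)))
      fun g x => (Fintype.sum_equiv (toPerm g) _ _ fun y =>
        (congrArg c (quotient_mk_smul g (x, y))).symm).symm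
    obtain ⟨b, hb⟩ := exists_comp_mk_eq_of_smul_eq (F := fun y => ∑ x, c (Quotient.mk _ (x, y)))
      fun g y => (Fintype.sum_equiv (toPerm g) _ _ fun x =>
        (congrArg c (quotient_mk_smul g (x, y))).symm).symm
    refine ⟨(a, b), ?_, ?_⟩
    · simp only [SetLike.mem_coe, LinearMap.mem_ker, orbitSumDiff_apply, ha, hb]
      rw [Finset.sum_comm, sub_self]
    · simp only [LinearMap.prodMap_apply, LinearMap.comp_apply, marginals_apply]
      exact Prod.ext (funext ha) (funext hb)
  · rintro _ ⟨⟨a, b⟩, hab, rfl⟩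
    rw [SetLike.mem_coe, LinearMap.mem_ker, orbitSumDiff_apply, sub_eq_zero] at hab
    have hX : (Fintype.card X : ℝ) ≠ 0 := Nat.cast_ne_zero.mpr Fintype.card_ne_zero
    have hY : (Fintype.card Y : ℝ) ≠ 0 := Nat.cast_ne_zero.mpr Fintype.card_ne_zero
    set s := ∑ x, a (Quotient.mk _ x)
    -- `a ⊗ 1/|Y| + 1/|X| ⊗ b - s/(|X| |Y|)` has marginals `a` and `b` since `∑ b = s`.
    obtain ⟨c, hc⟩ := exists_comp_mk_eq_of_smul_eq (G := G) (F := fun p : X × Y =>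
      a (Quotient.mk _ p.1) / Fintype.card Y + b (Quotient.mk _ p.2) / Fintype.card X -
        s / (Fintype.card X * Fintype.card Y))
      fun g p => by simp only [Prod.smul_fst, Prod.smul_snd, quotient_mk_smul]
    refine ⟨c, Prod.ext (funext fun x => ?_) (funext fun y => ?_)⟩ <;>
    · simp only [LinearMap.coe_comp, Function.comp_apply, marginals_apply, LinearMap.funLeft_apply,
        LinearMap.prodMap_apply, hc, sum_sub_distrib, sum_add_distrib, sum_const, card_univ,
        nsmul_eq_mul, ← sum_div, ← hab]
      field_simp
      ring

theorem finrank_range_marginals_comp_orbitFunLeft [Nonempty X] [Nonempty Y] :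
    Module.finrank ℝ (LinearMap.range (marginals X Y ∘ₗ orbitFunLeft G (X × Y))) =
      Nat.card (orbitRel.Quotient G X) + Nat.card (orbitRel.Quotient G Y) - 1 := by
  have hinj : Function.Injective ((orbitFunLeft G X).prodMap (orbitFunLeft G Y)) := by
    rw [LinearMap.coe_prodMap]
    exact (orbitFunLeft_injective X).prodMap (orbitFunLeft_injective Y)
  rw [range_marginals_comp_orbitFunLeft, ← (Submodule.equivMapOfInjective _ hinj _).finrank_eq,
    finrank_ker_orbitSumDiff]

end Coupling

theorem stmt_16_general {G X Y : Type*} [Group G] [Fintype X] [Fintype Y]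
    [MulAction G X] [MulAction G Y] [Nonempty X] [Nonempty Y]
    (μ₁ : X → ℝ) (μ₂ : Y → ℝ) :
    (Set.extremePoints ℝ (Kset G μ₁ μ₂)).ncard ≤
      (Nat.card (Quotient (MulAction.orbitRel G (X × Y)))).choose
        (Nat.card (Quotient (MulAction.orbitRel G X)) +
          Nat.card (Quotient (MulAction.orbitRel G Y)) - 1) := by
  classical
  have hinj := MulAction.orbitFunLeft_injective (G := G) (X × Y)
  calc (Set.extremePoints ℝ (Kset G μ₁ μ₂)).ncard
      = (Set.extremePoints ℝ (nonnegSolutions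
          (marginals X Y ∘ₗ MulAction.orbitFunLeft G (X × Y)) (μ₁, μ₂))).ncard := by
        rw [Kset_eq_image_nonnegSolutions, ← Set.image_extremePoints_of_injective _ hinj,
          Set.ncard_image_of_injective _ hinj]
    _ ≤ _ := ncard_extremePoints_nonnegSolutions_le
    _ = _ := by rw [finrank_range_marginals_comp_orbitFunLeft]

theorem stmt_16 {G X Y : Type*} [Group G] [Finite G] [Fintype X] [Fintype Y]
    [MulAction G X] [MulAction G Y] [Nonempty X] [Nonempty Y]
    (μ₁ : X → ℝ) (μ₂ : Y → ℝ)
    (h₁pos : ∀ x, 0 < μ₁ x) (h₂pos : ∀ y, 0 < μ₂ y)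
    (h₁sum : ∑ x, μ₁ x = 1) (h₂sum : ∑ y, μ₂ y = 1)
    (h₁inv : ∀ (g : G) (x : X), μ₁ (g • x) = μ₁ x)
    (h₂inv : ∀ (g : G) (y : Y), μ₂ (g • y) = μ₂ y) :
    (Set.extremePoints ℝ (Kset G μ₁ μ₂)).ncard ≤
      (Nat.card (Quotient (MulAction.orbitRel G (X × Y)))).choose
        (Nat.card (Quotient (MulAction.orbitRel G X)) +
          Nat.card (Quotient (MulAction.orbitRel G Y)) - 1) :=
  stmt_16_general μ₁ μ₂
end
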